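/- arXiv:1108.4647 — 10 statements merged into one kernel-verified Lean document; each statement's English description precedes it below -/
import Mathlib

section
/- Let T be a tree, let P be a bare path of maximum length in T, and let L be the set of leaves of T. Then 2(|V(P)|+1)(|L|−1) ≥ |V(T)|. -/
/-!
Root `T` at a leaf `r` and send every other vertex to its neighbour closer to `r`. Following
parents from a vertex of degree 2, one stays among degree-2 vertices for a while; the maximal
such chains are bare paths, so each has at most `|V(P)|` vertices, and a chain is determined by
its top vertex (a degree-2 vertex whose parent does not have degree 2), because a degree-2
vertex has only one child. A vertex `w ≠ r` has at most `deg w - 1` children, so by the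
handshake lemma there are at most `N - 1` chain tops, where `N` is the number of vertices of
degree `≠ 2`; the handshake lemma also gives `N ≤ 2(|L| - 1)`, since the vertices of degree
`≠ 2` that are not leaves have degree at least 3. Hence
`|V(T)| ≤ |V(P)| (N - 1) + N ≤ 2(|V(P)| + 1)(|L| - 1)`.
-/

open Finset

def IsBarePath {V : Type*} [Fintype V] [DecidableEq V] (T : SimpleGraph V)
    [DecidableRel T.Adj] {u v : V} (p : T.Walk u v) : Prop :=
  p.IsPath ∧ ∀ w ∈ p.support, T.degree w = 2

namespace SimpleGraph

section ParentMap

variable {V : Type*} {T : SimpleGraph V}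

/-- `p` sends every vertex other than the root `r` to a neighbour one step lower for the
height `h`; `p r` is just some neighbour of `r`. -/
structure IsParentMap (T : SimpleGraph V) (r : V) (p : V → V) (h : V → ℕ) : Prop where
  adj : ∀ v, T.Adj v (p v)
  height_parent : ∀ v, v ≠ r → h (p v) + 1 = h v

theorem Connected.exists_adj_dist_add_one_eq (hT : T.Connected) {v r : V} (hv : v ≠ r) :
    ∃ u, T.Adj v u ∧ T.dist u r + 1 = T.dist v r := by
  obtain ⟨q, hq⟩ := hT.exists_walk_length_eq_dist v r
  cases q with
  | nil => exact absurd rfl hv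
  | @cons _ u _ hvu q =>
    refine ⟨u, hvu, le_antisymm ?_ ?_⟩
    · rw [← hq, Walk.length_cons]
      exact Nat.add_le_add_right (dist_le q) 1
    · calc T.dist v r ≤ T.dist v u + T.dist u r := hT.dist_triangle
        _ = T.dist u r + 1 := by rw [dist_eq_one_iff_adj.mpr hvu, add_comm]

theorem Connected.exists_isParentMap [Nontrivial V] (hT : T.Connected) (r : V) :
    ∃ p, T.IsParentMap r p (T.dist · r) := by
  have hparent : ∀ v, ∃ u, T.Adj v u ∧ (v ≠ r → T.dist u r + 1 = T.dist v r) := by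
    intro v
    by_cases hv : v = r
    · obtain ⟨w, hw⟩ := exists_ne r
      obtain ⟨u, hu, -⟩ := hT.exists_adj_dist_add_one_eq hw.symm
      exact ⟨u, hv ▸ hu, fun h => absurd hv h⟩
    · obtain ⟨u, hu, hd⟩ := hT.exists_adj_dist_add_one_eq hv
      exact ⟨u, hu, fun _ => hd⟩
  choose p hadj hdist using hparent
  exact ⟨p, hadj, hdist⟩

variable {r : V} {p : V → V} {h : V → ℕ}

theorem IsParentMap.height_iterate (hP : T.IsParentMap r p h) {v : V} {k : ℕ}
    (hk : ∀ i < k, p^[i] v ≠ r) : h (p^[k] v) + k = h v := by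
  induction k with
  | zero => rfl
  | succ k ih =>
    rw [Function.iterate_succ_apply', ← ih fun i hi => hk i (by omega),
      ← hP.height_parent _ (hk k (by omega))]
    omega

def iterateWalk (hadj : ∀ v, T.Adj v (p v)) : (k : ℕ) → (v : V) → T.Walk v (p^[k] v)
  | 0, _ => Walk.nil
  | k + 1, v => Walk.cons (hadj v) (iterateWalk hadj k (p v))

theorem support_iterateWalk (hadj : ∀ v, T.Adj v (p v)) (k : ℕ) (v : V) :
    (iterateWalk hadj k v).support = (List.range (k + 1)).map (p^[·] v) := by
  induction k generalizing v with
  | zero => rfl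
  | succ k ih =>
    show v :: (iterateWalk hadj k (p v)).support = _
    rw [ih, List.range_succ_eq_map]
    simp [Function.comp_def, Function.iterate_succ_apply]

end ParentMap

section DegreeTwo

variable {V : Type*} [Fintype V] {T : SimpleGraph V} [DecidableRel T.Adj]
  {r : V} {p : V → V} {h : V → ℕ}

def chainTops (T : SimpleGraph V) [DecidableRel T.Adj] (p : V → V) : Finset V :=
  {c | T.degree c = 2 ∧ T.degree (p c) ≠ 2}

theorem IsParentMap.exists_iterate_degree_ne_two (hP : T.IsParentMap r p h)
    (hr : T.degree r ≠ 2) (v : V) : ∃ m, T.degree (p^[m] v) ≠ 2 := by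
  by_contra! hall
  have := hP.height_iterate (k := h v + 1) fun i _ hi => hr (hi ▸ hall i)
  omega

variable [DecidableEq V]

def children (p : V → V) (r w : V) : Finset V := {c | c ≠ r ∧ p c = w}

theorem IsParentMap.children_subset_neighborFinset (hP : T.IsParentMap r p h) (w : V) :
    children p r w ⊆ T.neighborFinset w := by
  intro c hc
  simp only [children, mem_filter, mem_univ, true_and] at hc
  rw [mem_neighborFinset, ← hc.2]
  exact (hP.adj c).symm

theorem IsParentMap.card_children_le_degree (hP : T.IsParentMap r p h) (w : V) :
    #(children p r w) ≤ T.degree w :=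
  (card_le_card (hP.children_subset_neighborFinset w)).trans_eq (card_neighborFinset_eq_degree ..)

theorem IsParentMap.card_children_add_one_le_degree (hP : T.IsParentMap r p h) {w : V}
    (hw : w ≠ r) : #(children p r w) + 1 ≤ T.degree w := by
  have hpw : p w ∉ children p r w := by
    simp only [children, mem_filter, mem_univ, true_and, not_and]
    intro hpr hpp
    have := hP.height_parent (p w) hpr
    rw [hpp, ← hP.height_parent w hw] at this
    omega
  rw [← card_neighborFinset_eq_degree, ← card_insert_of_notMem hpw]
  exact card_le_card (insert_subset ((mem_neighborFinset ..).mpr (hP.adj w))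
    (hP.children_subset_neighborFinset w))

theorem IsParentMap.eq_of_iterate_eq (hP : T.IsParentMap r p h) (hr : T.degree r ≠ 2)
    {v v' : V} {j : ℕ} (hv : ∀ i ≤ j, T.degree (p^[i] v) = 2)
    (hv' : ∀ i ≤ j, T.degree (p^[i] v') = 2) (heq : p^[j] v = p^[j] v') : v = v' := by
  induction j generalizing v v' with
  | zero => exact heq
  | succ j ih =>
    have hpp : p v = p v' :=
      ih (fun i hi => hv (i + 1) (by omega)) (fun i hi => hv' (i + 1) (by omega)) heq
    have hne : ∀ {x}, T.degree x = 2 → x ≠ r := fun hx hxr => hr (hxr ▸ hx)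
    have hdeg : T.degree (p v) = 2 := hv 1 (by omega)
    have hle : #(children p r (p v)) ≤ 1 := by
      have := hP.card_children_add_one_le_degree (hne hdeg)
      omega
    refine card_le_one.mp hle v ?_ v' ?_
    · simpa [children] using hne (hv 0 (by omega))
    · simpa [children, hpp] using hne (hv' 0 (by omega))

theorem IsParentMap.isBarePath_iterateWalk (hP : T.IsParentMap r p h) (hr : T.degree r ≠ 2)
    {v : V} {k : ℕ} (hk : ∀ i ≤ k, T.degree (p^[i] v) = 2) :
    IsBarePath T (iterateWalk hP.adj k v) := by
  have hheight : ∀ i ≤ k, h (p^[i] v) + i = h v := fun i hi =>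
    hP.height_iterate fun i' hi' hr' => hr (hr' ▸ hk i' (by omega))
  refine ⟨?_, fun w hw => ?_⟩
  · rw [Walk.isPath_def, support_iterateWalk]
    refine List.Nodup.map_on (fun i hi i' hi' hii => ?_) List.nodup_range
    rw [List.mem_range] at hi hi'
    have hi_height := hheight i (by omega)
    rw [hii, ← hheight i' (by omega)] at hi_height
    omega
  · rw [support_iterateWalk, List.mem_map] at hw
    obtain ⟨i, hi, rfl⟩ := hw
    exact hk i (Nat.lt_succ_iff.mp (List.mem_range.mp hi))

theorem IsParentMap.card_degree_two_le (hP : T.IsParentMap r p h) (hr : T.degree r ≠ 2)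
    {b : ℕ} (hmax : ∀ (u v : V) (q : T.Walk u v), IsBarePath T q → q.support.length ≤ b) :
    #{v | T.degree v = 2} ≤ b * #(chainTops T p) := by
  obtain ⟨k, hk_top, hk_chain⟩ : ∃ k : V → ℕ, (∀ v, T.degree (p^[k v] v) ≠ 2) ∧
      ∀ v, ∀ i < k v, T.degree (p^[i] v) = 2 :=
    ⟨fun v => Nat.find (hP.exists_iterate_degree_ne_two hr v),
      fun v => Nat.find_spec (hP.exists_iterate_degree_ne_two hr v),
      fun _ _ hi => not_not.mp (Nat.find_min _ hi)⟩
  have hk_pos : ∀ v, T.degree v = 2 → 0 < k v := fun v hv =>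
    Nat.pos_of_ne_zero fun h0 => hk_top v (h0 ▸ hv)
  have hk_le : ∀ v, T.degree v = 2 → k v ≤ b := by
    intro v hv
    have := hmax _ _ _ (hP.isBarePath_iterateWalk hr (k := k v - 1)
      fun i hi => hk_chain v i (by have := hk_pos v hv; omega))
    rwa [support_iterateWalk, List.length_map, List.length_range,
      Nat.sub_add_cancel (hk_pos v hv)] at this
  -- a degree-2 vertex is determined by the top of its chain and its distance below it
  calc #{v | T.degree v = 2}
      ≤ #(chainTops T p ×ˢ range b) := by
        refine card_le_card_of_injOn (fun v => (p^[k v - 1] v, k v - 1)) ?_ ?_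
        · intro v hv
          simp only [coe_filter, mem_univ, true_and, Set.mem_ofPred_eq] at hv
          have hpos := hk_pos v hv
          simp only [coe_product, coe_range, Set.mem_prod, mem_coe, Set.mem_Iio, chainTops,
            mem_filter, mem_univ, true_and]
          refine ⟨⟨hk_chain v _ (by omega), ?_⟩, by have := hk_le v hv; omega⟩
          rw [← Function.iterate_succ_apply' p, Nat.succ_eq_add_one, Nat.sub_add_cancel hpos]
          exact hk_top v
        · intro v hv v' hv' heq
          simp only [coe_filter, mem_univ, true_and, Set.mem_ofPred_eq] at hv hv'
          simp only [Prod.mk.injEq] at heq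
          obtain ⟨htop, hj⟩ := heq
          rw [← hj] at htop
          have := hk_pos v hv
          have := hk_pos v' hv'
          exact hP.eq_of_iterate_eq hr (fun i hi => hk_chain v i (by omega))
            (fun i hi => hk_chain v' i (by omega)) htop
    _ = b * #(chainTops T p) := by rw [card_product, card_range, mul_comm]

theorem IsParentMap.card_chainTops_add_le (hP : T.IsParentMap r p h) (hr : T.degree r ≠ 2) :
    #(chainTops T p) + #{v | T.degree v ≠ 2} ≤ ∑ w ∈ {v | T.degree v ≠ 2}, T.degree w + 1 := by
  set N : Finset V := {v | T.degree v ≠ 2}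
  have hsub : chainTops T p ⊆ N.biUnion (children p r) := by
    intro c hc
    simp only [chainTops, mem_filter, mem_univ, true_and] at hc
    simp only [mem_biUnion, children, N, mem_filter, mem_univ, true_and]
    exact ⟨p c, hc.2, fun hcr => hr (hcr ▸ hc.1), rfl⟩
  have hrN : r ∈ N := by simpa [N] using hr
  calc #(chainTops T p) + #N ≤ ∑ w ∈ N, (#(children p r w) + 1) := by
        rw [sum_add_distrib, sum_const, smul_eq_mul, mul_one]
        exact Nat.add_le_add_right ((card_le_card hsub).trans card_biUnion_le) _
    _ = #(children p r r) + 1 + ∑ w ∈ N.erase r, (#(children p r w) + 1) :=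
        (add_sum_erase N _ hrN).symm
    _ ≤ T.degree r + 1 + ∑ w ∈ N.erase r, T.degree w := by
        gcongr with w hw
        · exact hP.card_children_le_degree r
        · exact hP.card_children_add_one_le_degree (ne_of_mem_erase hw)
    _ = ∑ w ∈ N, T.degree w + 1 := by rw [← add_sum_erase N _ hrN]; ring

end DegreeTwo

section Tree

variable {V : Type*} [Fintype V] {T : SimpleGraph V} [DecidableRel T.Adj]

theorem IsTree.sum_degree_ne_two (hT : T.IsTree) :
    ∑ w ∈ {v | T.degree v ≠ 2}, T.degree w + 2 = 2 * #{v | T.degree v ≠ 2} := by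
  have hsum := T.sum_degrees_eq_twice_card_edges
  have hedges := hT.card_edgeFinset
  have hcard := card_filter_add_card_filter_not (s := univ) (fun v => T.degree v ≠ 2)
  have htwo : ∑ w ∈ {v | ¬T.degree v ≠ 2}, T.degree w = 2 * #{v | ¬T.degree v ≠ 2} := by
    rw [sum_congr rfl fun w hw => not_not.mp (mem_filter.mp hw).2, sum_const, smul_eq_mul,
      mul_comm]
  rw [← sum_filter_add_sum_filter_not univ (fun v => T.degree v ≠ 2), htwo] at hsum
  rw [card_univ] at hcard
  omega

theorem IsTree.card_degree_ne_two_add_two_le [Nontrivial V] (hT : T.IsTree) :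
    #{v | T.degree v ≠ 2} + 2 ≤ 2 * #{v | T.degree v = 1} := by
  have hsum := hT.sum_degree_ne_two
  have hleaves : ({v | T.degree v ≠ 2} : Finset V).filter (T.degree · = 1) =
      ({v | T.degree v = 1} : Finset V) := by
    ext v
    simp only [mem_filter, mem_univ, true_and]
    omega
  have hsplit := sum_filter_add_sum_filter_not {v | T.degree v ≠ 2} (T.degree · = 1)
    fun w => T.degree w
  have hcard := card_filter_add_card_filter_not (s := {v | T.degree v ≠ 2}) (T.degree · = 1)
  rw [hleaves] at hsplit hcard
  have hleaf_sum : ∑ w ∈ {v | T.degree v = 1}, T.degree w = #{v | T.degree v = 1} := by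
    rw [sum_congr rfl fun w hw => (mem_filter.mp hw).2, sum_const, smul_eq_mul, mul_one]
  have hbranch := card_nsmul_le_sum (({v | T.degree v ≠ 2} : Finset V).filter (¬T.degree · = 1))
    (fun w => T.degree w) 3 fun w hw => by
      have := hT.connected.preconnected.degree_pos_of_nontrivial w
      simp only [mem_filter, mem_univ, true_and] at hw
      omega
  rw [smul_eq_mul] at hbranch
  omega

end Tree

end SimpleGraph

/-- If every bare path of a tree `T` has at most `b` vertices
(in particular for `b` the number of vertices of a longest bare path, or `b = 0` if
there is no bare path) and `L` is the set of leaves of `T`, then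
`2(b+1)(|L|-1) ≥ |V(T)|`. -/
theorem stmt_1 {V : Type*} [Fintype V] [DecidableEq V] (T : SimpleGraph V)
    [DecidableRel T.Adj] (hT : T.IsTree) (hn : 2 ≤ Fintype.card V) (b : ℕ)
    (hmax : ∀ (u v : V) (p : T.Walk u v), IsBarePath T p → p.support.length ≤ b) :
    Fintype.card V ≤ 2 * (b + 1) * ((univ.filter fun v => T.degree v = 1).card - 1) := by
  have : Nontrivial V := Fintype.one_lt_card_iff_nontrivial.mp hn
  obtain ⟨r, hr⟩ := hT.exists_vert_degree_one_of_nontrivial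
  obtain ⟨p, hP⟩ := hT.connected.exists_isParentMap r
  have hr2 : T.degree r ≠ 2 := by omega
  have hdeg_two := hP.card_degree_two_le hr2 hmax
  have htops := hP.card_chainTops_add_le hr2
  have hsum := hT.sum_degree_ne_two
  have hleaves := hT.card_degree_ne_two_add_two_le
  calc Fintype.card V = #{v | T.degree v = 2} + #{v | T.degree v ≠ 2} := by
        rw [← card_univ]
        exact (card_filter_add_card_filter_not _).symm
    _ ≤ b * (2 * (#{v | T.degree v = 1} - 1)) + 2 * (#{v | T.degree v = 1} - 1) :=
        add_le_add (hdeg_two.trans (Nat.mul_le_mul_left b (by omega))) (by omega)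
    _ = 2 * (b + 1) * (#{v | T.degree v = 1} - 1) := by ring
end

section
/- Let n ∈ ℕ and d, d₀ ∈ ℝ⁺ satisfy 3 ≤ d₀ ≤ d ≤ n/6. Then every (n,d)-expander is also an (n,d₀)-expander. -/
open Finset

/-- The external neighborhood of a vertex set `X` in a graph `G`: all vertices outside `X`
with a neighbor in `X`. -/
noncomputable def extNbhd {V : Type*} [Fintype V] [DecidableEq V] (G : SimpleGraph V)
    (X : Finset V) : Finset V := by
  classical exact univ.filter fun v => v ∉ X ∧ ∃ x ∈ X, G.Adj x v

/-- `eCount G X Y` is the number of ordered pairs `(x, y) ∈ X × Y` with `{x,y} ∈ E(G)`. -/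
noncomputable def eCount {V : Type*} [DecidableEq V] (G : SimpleGraph V)
    (X Y : Finset V) : ℕ := by
  classical exact ((X ×ˢ Y).filter fun p => G.Adj p.1 p.2).card

/-- `mOf n d = ⌈n / (2d)⌉`. -/
noncomputable def mOf (n : ℕ) (d : ℝ) : ℕ := ⌈(n : ℝ) / (2 * d)⌉₊

/-- A graph `G` is an `(n,d)`-expander if it has `n` vertices,
(E1) `|N_G(X)| ≥ d|X|` for all `X` with `1 ≤ |X| < m(n,d)`, and
(E2) there is an edge between any two disjoint sets of size `m(n,d)`. -/
def IsExpander {V : Type*} [Fintype V] [DecidableEq V] (G : SimpleGraph V)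
    (n : ℕ) (d : ℝ) : Prop :=
  Fintype.card V = n ∧
  (∀ X : Finset V, 1 ≤ X.card → X.card < mOf n d →
    d * X.card ≤ ((extNbhd G X).card : ℝ)) ∧
  (∀ X Y : Finset V, Disjoint X Y → X.card = mOf n d → Y.card = mOf n d →
    0 < eCount G X Y)

/-! A set `X` of size at least `m(n,d)` has no edges to the complement `T` of `X ∪ N(X)`, so by
(E2) `|T| < m(n,d)`; hence `|N(X)| > n - |X| - n/(2d)`. For `3 ≤ d₀ ≤ d` and `|X| < m(n,d₀)` both
`|X|` and `|T|` are below `n/6`, so `|N(X)| > 2n/3 > d₀|X|`. Below `m(n,d)` expansion by `d₀` is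
inherited from expansion by `d`, and (E2) passes to the larger sets of size `m(n,d₀) ≥ m(n,d)`. -/

section Graph

variable {V : Type*} [DecidableEq V] (G : SimpleGraph V)

lemma eCount_mono {X X' Y Y' : Finset V} (hX : X ⊆ X') (hY : Y ⊆ Y') :
    eCount G X Y ≤ eCount G X' Y' := by
  classical
  exact card_le_card (filter_subset_filter _ (product_subset_product hX hY))

lemma eCount_pos_of_le_card {m : ℕ}
    (hm : ∀ X Y : Finset V, Disjoint X Y → X.card = m → Y.card = m → 0 < eCount G X Y)
    {X Y : Finset V} (hXY : Disjoint X Y) (hX : m ≤ X.card) (hY : m ≤ Y.card) :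
    0 < eCount G X Y := by
  obtain ⟨X', hX'X, hX'⟩ := exists_subset_card_eq hX
  obtain ⟨Y', hY'Y, hY'⟩ := exists_subset_card_eq hY
  calc 0 < eCount G X' Y' := hm X' Y' (hXY.mono hX'X hY'Y) hX' hY'
    _ ≤ eCount G X Y := eCount_mono G hX'X hY'Y

variable [Fintype V]

lemma eCount_eq_zero_of_disjoint_extNbhd {X Y : Finset V} (h : Disjoint (X ∪ extNbhd G X) Y) :
    eCount G X Y = 0 := by
  classical
  simp only [eCount, card_eq_zero, filter_eq_empty_iff, mem_product, and_imp, Prod.forall]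
  intro x y hx hy hxy
  refine disjoint_right.mp h hy (mem_union_right _ ?_)
  simp only [extNbhd, mem_filter, mem_univ, true_and]
  exact ⟨fun hyX => disjoint_right.mp h hy (mem_union_left _ hyX), x, hx, hxy⟩

lemma card_le_card_add_card_extNbhd_add_card_compl (X : Finset V) :
    Fintype.card V ≤ X.card + (extNbhd G X).card + (X ∪ extNbhd G X)ᶜ.card := by
  rw [← card_add_card_compl (X ∪ extNbhd G X)]
  exact Nat.add_le_add_right (card_union_le _ _) _

end Graph

lemma mOf_anti (n : ℕ) {d d₀ : ℝ} (hd₀ : 0 < d₀) (h : d₀ ≤ d) : mOf n d ≤ mOf n d₀ :=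
  Nat.ceil_le_ceil <| div_le_div_of_nonneg_left (Nat.cast_nonneg n) (by positivity) (by linarith)

lemma div_two_mul_le_div_six (n : ℕ) {d : ℝ} (hd : 3 ≤ d) : (n : ℝ) / (2 * d) ≤ n / 6 :=
  div_le_div_of_nonneg_left (Nat.cast_nonneg n) (by norm_num) (by linarith)

namespace IsExpander

variable {V : Type*} [Fintype V] [DecidableEq V] {G : SimpleGraph V} {n : ℕ} {d : ℝ}

lemma card_compl_lt_mOf (hG : IsExpander G n d) {X : Finset V} (hX : mOf n d ≤ X.card) :
    (X ∪ extNbhd G X)ᶜ.card < mOf n d := by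
  by_contra! hT
  have hdisj : Disjoint X (X ∪ extNbhd G X)ᶜ := disjoint_compl_right.mono_left subset_union_left
  exact (eCount_pos_of_le_card G hG.2.2 hdisj hX hT).ne'
    (eCount_eq_zero_of_disjoint_extNbhd G disjoint_compl_right)

lemma sub_lt_card_extNbhd (hG : IsExpander G n d) {X : Finset V} (hX : mOf n d ≤ X.card) :
    (n : ℝ) - X.card - n / (2 * d) < (extNbhd G X).card := by
  have hT : ((X ∪ extNbhd G X)ᶜ.card : ℝ) < n / (2 * d) := Nat.lt_ceil.mp (hG.card_compl_lt_mOf hX)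
  have hcover : (n : ℝ) ≤ X.card + (extNbhd G X).card + (X ∪ extNbhd G X)ᶜ.card := by
    exact_mod_cast hG.1 ▸ card_le_card_add_card_extNbhd_add_card_compl G X
  linarith

lemma expansion_of_le (hG : IsExpander G n d) {d₀ : ℝ} (h0 : 3 ≤ d₀) (h1 : d₀ ≤ d)
    {X : Finset V} (hX1 : 1 ≤ X.card) (hX2 : X.card < mOf n d₀) :
    d₀ * X.card ≤ (extNbhd G X).card := by
  by_cases hsmall : X.card < mOf n d
  · exact (mul_le_mul_of_nonneg_right h1 (Nat.cast_nonneg _)).trans (hG.2.1 X hX1 hsmall)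
  have hN := hG.sub_lt_card_extNbhd (not_lt.mp hsmall)
  have hXn : (X.card : ℝ) < n / (2 * d₀) := Nat.lt_ceil.mp hX2
  have hdX : d₀ * X.card < n / 2 := by
    calc d₀ * X.card < d₀ * (n / (2 * d₀)) := mul_lt_mul_of_pos_left hXn (by linarith)
      _ = n / 2 := by field_simp
  linarith [div_two_mul_le_div_six n h0, div_two_mul_le_div_six n (h0.trans h1)]

lemma edge_of_le (hG : IsExpander G n d) {d₀ : ℝ} (h0 : 0 < d₀) (h1 : d₀ ≤ d)
    (X Y : Finset V) (hXY : Disjoint X Y) (hX : X.card = mOf n d₀) (hY : Y.card = mOf n d₀) :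
    0 < eCount G X Y :=
  eCount_pos_of_le_card G hG.2.2 hXY (hX ▸ mOf_anti n h0 h1) (hY ▸ mOf_anti n h0 h1)

end IsExpander

theorem stmt_2_general {V : Type*} [Fintype V] [DecidableEq V] (n : ℕ) (d d₀ : ℝ)
    (h0 : 3 ≤ d₀) (h1 : d₀ ≤ d)
    (G : SimpleGraph V) (hG : IsExpander G n d) : IsExpander G n d₀ :=
  ⟨hG.1, fun _ => hG.expansion_of_le h0 h1, hG.edge_of_le (by linarith) h1⟩

/-- Monotonicity of the expander property: if `3 ≤ d₀ ≤ d ≤ n/6`, then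
every `(n,d)`-expander is also an `(n,d₀)`-expander. -/
theorem stmt_2 {V : Type*} [Fintype V] [DecidableEq V] (n : ℕ) (d d₀ : ℝ)
    (h0 : 3 ≤ d₀) (h1 : d₀ ≤ d) (h2 : d ≤ (n : ℝ) / 6)
    (G : SimpleGraph V) (hG : IsExpander G n d) : IsExpander G n d₀ :=
  stmt_2_general n d d₀ h0 h1 G hG
end

section
/- Let m ∈ ℕ and let G be a graph such that e_G(X,Y) > 0 for all disjoint X, Y ⊆ V(G) with |X| = |Y| = m. Then for all disjoint X, Y ⊆ V(G) with |X| ≥ m and |Y| ≥ 2m, we have e_G(X,Y) ≥ |X||Y|/(4m). -/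
open Finset

lemma eCount_eq_sum_card_filter_adj {V : Type*} [DecidableEq V] (G : SimpleGraph V)
    [DecidableRel G.Adj] (X Y : Finset V) :
    eCount G X Y = ∑ x ∈ X, #(Y.filter (G.Adj x)) := by
  classical
  unfold eCount
  rw [card_filter, sum_product]
  refine sum_congr rfl fun x _ => ?_
  rw [card_filter]
  exact sum_congr rfl fun y _ => by congr

/-- Removing an element of maximal weight does not increase the average weight. -/
lemma exists_subset_card_eq_card_mul_sum_le {α : Type*} [DecidableEq α] (f : α → ℕ) {m : ℕ}
    {X : Finset α} (hm : m ≤ #X) :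
    ∃ S ⊆ X, #S = m ∧ #X * ∑ x ∈ S, f x ≤ m * ∑ x ∈ X, f x := by
  obtain ⟨k, hk⟩ := Nat.exists_eq_add_of_le hm
  induction k generalizing X with
  | zero => exact ⟨X, subset_rfl, by omega, by rw [hk]; simp⟩
  | succ k ih =>
    obtain ⟨x₀, hx₀, hmax⟩ := X.exists_max_image f (card_pos.mp (by omega))
    have hcard : #(X.erase x₀) = m + k := by rw [card_erase_of_mem hx₀]; omega
    obtain ⟨S, hS, hScard, hle⟩ := ih (by omega) hcard
    refine ⟨S, hS.trans (erase_subset _ _), hScard, ?_⟩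
    have hS_le : ∑ x ∈ S, f x ≤ m * f x₀ := by
      calc ∑ x ∈ S, f x ≤ ∑ _x ∈ S, f x₀ :=
            sum_le_sum fun x hx => hmax x (erase_subset _ _ (hS hx))
        _ = m * f x₀ := by rw [sum_const, hScard, smul_eq_mul]
    have hsplit := sum_erase_add X f hx₀
    rw [hcard] at hle
    rw [hk]
    nlinarith

/-- `S` has at most `e(S, Y)` neighbours in `Y`, and the non-neighbours contain no `m`-set. -/
lemma card_lt_add_eCount {V : Type*} [DecidableEq V] {m : ℕ} {G : SimpleGraph V}
    (h : ∀ X Y : Finset V, Disjoint X Y → #X = m → #Y = m → 0 < eCount G X Y)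
    {S Y : Finset V} (hSY : Disjoint S Y) (hS : #S = m) :
    #Y < m + eCount G S Y := by
  classical
  set N := ((S ×ˢ Y).filter fun p => G.Adj p.1 p.2).image Prod.snd
  have hN : #N ≤ eCount G S Y := by unfold eCount; exact card_image_le
  by_contra! hle
  have hm : m ≤ #(Y \ N) := by
    rw [card_sdiff_of_subset fun y hy => by grind]
    omega
  obtain ⟨T, hT, hTcard⟩ := exists_subset_card_eq hm
  have hST : Disjoint S T := hSY.mono_right (hT.trans sdiff_subset)
  have hno_edge : eCount G S T = 0 := by
    unfold eCount
    rw [card_eq_zero, filter_eq_empty_iff]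
    rintro ⟨s, t⟩ hst hadj
    rw [mem_product] at hst
    have ht := hT hst.2
    rw [mem_sdiff] at ht
    exact ht.2 (mem_image.mpr ⟨(s, t), by simp_all, rfl⟩)
  exact (h S T hST hS hTcard).ne' hno_edge

/-- The `m` vertices of `X` with fewest neighbours in `Y` still send more than
`|Y| - m ≥ |Y| / 2` edges to `Y`, and they have at most average degree into `Y`; this even
gives `2m` in place of `4m`. -/
theorem stmt_3_general {V : Type*} [DecidableEq V] (m : ℕ) (G : SimpleGraph V)
    (h : ∀ X Y : Finset V, Disjoint X Y → X.card = m → Y.card = m → 0 < eCount G X Y)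
    (X Y : Finset V) (hXY : Disjoint X Y) (hX : m ≤ X.card) (hY : 2 * m ≤ Y.card) :
    ((X.card : ℝ) * Y.card) / (4 * m) ≤ (eCount G X Y : ℝ) := by
  classical
  rcases Nat.eq_zero_or_pos m with rfl | hm
  · simp
  obtain ⟨S, hSX, hS, hSavg⟩ := exists_subset_card_eq_card_mul_sum_le
    (fun x => #(Y.filter (G.Adj x))) hX
  rw [← eCount_eq_sum_card_filter_adj, ← eCount_eq_sum_card_filter_adj] at hSavg
  have hSY := card_lt_add_eCount h (hXY.mono_left hSX) hS
  rw [div_le_iff₀ (by positivity)]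
  exact_mod_cast (by nlinarith : #X * #Y ≤ eCount G X Y * (4 * m))

/-- If there is an edge between any two disjoint `m`-sets of `G`, then for all
disjoint `X, Y` with `|X| ≥ m` and `|Y| ≥ 2m` one has `e_G(X,Y) ≥ |X||Y|/(4m)`. -/
theorem stmt_3 {V : Type*} [Fintype V] [DecidableEq V] (m : ℕ) (G : SimpleGraph V)
    (h : ∀ X Y : Finset V, Disjoint X Y → X.card = m → Y.card = m → 0 < eCount G X Y)
    (X Y : Finset V) (hXY : Disjoint X Y) (hX : m ≤ X.card) (hY : 2 * m ≤ Y.card) :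
    ((X.card : ℝ) * Y.card) / (4 * m) ≤ (eCount G X Y : ℝ) :=
  stmt_3_general m G h X Y hXY hX hY
end

section
/- Let G be a graph, m ∈ ℕ, and W ⊆ V(G) with |W| ≥ m². Suppose that e_G(X,Y) > 0 for all X ⊆ V(G)∖W and Y ⊆ W with |X| = |Y| = m. Then the number of vertices v ∈ V(G)∖W with |N_G(v) ∩ W| ≤ m − 1 is at most m − 1. -/
open Finset

/-!
Were there `m` exceptional vertices, together they would have at most `m (m - 1)` neighbours
in `W`; since `|W| ≥ m²`, some `m` vertices of `W` remain, and there is no edge between them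
and the exceptional ones.
-/

namespace SimpleGraph

variable {V : Type*} (G : SimpleGraph V)

theorem eCount_eq_zero_iff [DecidableEq V] {X Y : Finset V} :
    eCount G X Y = 0 ↔ ∀ x ∈ X, ∀ y ∈ Y, ¬G.Adj x y := by
  classical
  simp only [eCount, card_eq_zero, filter_eq_empty_iff, mem_product, Prod.forall, and_imp]
  exact ⟨fun h x hx y hy => h x y hx hy, fun h x y hx hy => h x hx y hy⟩

theorem exists_subset_card_eq_forall_not_adj [DecidableEq V] [DecidableRel G.Adj]
    {X W : Finset V} {k m : ℕ}
    (hdeg : ∀ x ∈ X, (W.filter (G.Adj x)).card ≤ k) (hW : X.card * k + m ≤ W.card) :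
    ∃ Y ⊆ W, Y.card = m ∧ ∀ x ∈ X, ∀ y ∈ Y, ¬G.Adj x y := by
  set N := X.biUnion fun x => W.filter (G.Adj x)
  have hN : N.card ≤ X.card * k := card_biUnion_le_card_mul _ _ _ hdeg
  have hm : m ≤ (W \ N).card := by
    have := le_card_sdiff N W
    omega
  obtain ⟨Y, hYWN, hY⟩ := exists_subset_card_eq hm
  refine ⟨Y, hYWN.trans sdiff_subset, hY, fun x hx y hy hxy => ?_⟩
  obtain ⟨hyW, hyN⟩ := mem_sdiff.mp (hYWN hy)
  exact hyN (mem_biUnion.mpr ⟨x, hx, mem_filter.mpr ⟨hyW, hxy⟩⟩)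

end SimpleGraph

/-- Small Exceptional Sets: if `|W| ≥ m²` and there is an edge between any
`m`-subset of `V∖W` and any `m`-subset of `W`, then at most `m - 1` vertices of `V∖W`
have at most `m - 1` neighbors in `W`. -/
theorem stmt_4 {V : Type*} [Fintype V] [DecidableEq V] (G : SimpleGraph V)
    [DecidableRel G.Adj] (m : ℕ) (W : Finset V) (hW : m ^ 2 ≤ W.card)
    (h : ∀ X Y : Finset V, X ⊆ univ \ W → Y ⊆ W → X.card = m → Y.card = m →
      0 < eCount G X Y) :
    ((univ \ W).filter fun v => (W.filter fun w => G.Adj v w).card ≤ m - 1).card ≤ m - 1 := by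
  set B := (univ \ W).filter fun v => (W.filter fun w => G.Adj v w).card ≤ m - 1
  by_contra! hB
  obtain ⟨X, hXB, hX⟩ := exists_subset_card_eq (s := B) (n := m) (by omega)
  have hsq : m * (m - 1) + m = m ^ 2 := by cases m <;> simp [pow_two, Nat.mul_succ]
  obtain ⟨Y, hYW, hY, hXY⟩ := G.exists_subset_card_eq_forall_not_adj (X := X) (W := W)
    (fun x hx => (mem_filter.mp (hXB hx)).2) (by rw [hX, hsq]; exact hW)
  have hpos := h X Y (hXB.trans (filter_subset _ _)) hYW hX hY
  exact hpos.ne' ((G.eCount_eq_zero_iff).mpr hXY)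
end

section
/- Let G be an (n,d)-expander, let U ⊆ V(G), and suppose that for every X ⊆ V(G) with 1 ≤ |X| < m(n,d) one has |N_G(X) ∩ U| ≥ d'|X|, where d' := |U|d/(5n) and m(n,d') ≥ m(n,d). Then for every W with U ⊆ W ⊆ V(G), the induced subgraph G[W] satisfies |N_{G[W]}(X)| ≥ d'|X| for all X ⊆ W with 1 ≤ |X| < m(|W|,d'), provided 2d'(m(|U|,d')−1) − 2m(|U|,d') ≥ d' m(|U|,d'). -/
open Finset

/-!
Small sets `X` expand into `U ⊆ W` by hypothesis. If `|X| ≥ m(n,d)`, the vertices of `W` outside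
`X ∪ N(X)` number fewer than `m(n,d)`, since otherwise the expander would have an edge between them
and `X`. As `|W| > 2d'(m(|W|,d') - 1)` and both `|X|` and `m(n,d)` are below `m(|W|,d')`, this
leaves at least `d'|X|` vertices of `N(X) ∩ W`; the arithmetic condition, which only improves as
`m(·,d')` grows from `|U|` to `|W|`, forces `d' > 2` and makes the count work.
-/

lemma mem_extNbhd {V : Type*} [Fintype V] [DecidableEq V] (G : SimpleGraph V)
    (X : Finset V) (v : V) : v ∈ extNbhd G X ↔ v ∉ X ∧ ∃ x ∈ X, G.Adj x v := by
  classical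
  simp [extNbhd]

lemma mOf_mono {d : ℝ} (hd : 0 < d) {a b : ℕ} (hab : a ≤ b) : mOf a d ≤ mOf b d :=
  Nat.ceil_mono (div_le_div_of_nonneg_right (by exact_mod_cast hab) (by positivity))

lemma two_mul_mul_mOf_sub_one_lt {d : ℝ} (hd : 0 < d) (N : ℕ) :
    2 * d * ((mOf N d : ℝ) - 1) < N := by
  have hceil : (mOf N d : ℝ) - 1 < N / (2 * d) := by
    have : (mOf N d : ℝ) < N / (2 * d) + 1 := Nat.ceil_lt_add_one (by positivity)
    linarith
  rwa [lt_div_iff₀ (by positivity), mul_comm] at hceil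

lemma two_mul_le_mul_sub_two_of_le {d M m : ℝ} (hd : 0 < d) (hM : 0 ≤ M)
    (h : d * M ≤ 2 * d * (M - 1) - 2 * M) (hMm : M ≤ m) : 2 * m ≤ d * (m - 2) := by
  have hM2 : 2 < M := by
    by_contra! hM2
    nlinarith [mul_nonneg hd.le (by linarith : (0 : ℝ) ≤ 2 - M)]
  have hd2 : 2 < d := by
    by_contra! hd2
    nlinarith [mul_nonneg (by linarith : (0 : ℝ) ≤ 2 - d) (by linarith : (0 : ℝ) ≤ M - 2)]
  nlinarith [mul_nonneg (by linarith : (0 : ℝ) ≤ d - 2) (by linarith : (0 : ℝ) ≤ m - M)]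

namespace IsExpander

variable {V : Type*} [Fintype V] [DecidableEq V] {G : SimpleGraph V} {n : ℕ} {d : ℝ}

lemma card_lt_of_disjoint_extNbhd (hG : IsExpander G n d) {X S : Finset V}
    (hX : mOf n d ≤ X.card) (hS : Disjoint S (X ∪ extNbhd G X)) : S.card < mOf n d := by
  by_contra! hSm
  obtain ⟨B, hBS, hB⟩ := exists_subset_card_eq hSm
  obtain ⟨A, hAX, hA⟩ := exists_subset_card_eq hX
  have hAB : Disjoint A B := (hS.mono hBS (hAX.trans subset_union_left)).symm
  obtain ⟨⟨a, b⟩, hab⟩ := card_pos.mp (hG.2.2 A B hAB hA hB)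
  simp only [mem_filter, mem_product] at hab
  obtain ⟨⟨ha, hb⟩, hadj⟩ := hab
  have hbX : b ∉ X := fun h => disjoint_left.mp hS (hBS hb) (mem_union_left _ h)
  exact disjoint_left.mp hS (hBS hb)
    (mem_union_right _ ((mem_extNbhd G X b).mpr ⟨hbX, a, hAX ha, hadj⟩))

lemma card_lt_card_add_card_extNbhd_inter (hG : IsExpander G n d) {X : Finset V}
    (hX : mOf n d ≤ X.card) (W : Finset V) :
    W.card < X.card + (extNbhd G X ∩ W).card + mOf n d := by
  have hrest := hG.card_lt_of_disjoint_extNbhd hX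
    (sdiff_disjoint : Disjoint (W \ (X ∪ extNbhd G X)) _)
  have hcover : W ⊆ X ∪ (extNbhd G X ∩ W) ∪ W \ (X ∪ extNbhd G X) := by
    intro w hw
    simp only [mem_union, mem_inter, mem_sdiff]
    tauto
  have := (card_le_card hcover).trans ((card_union_le _ _).trans
    (Nat.add_le_add_right (card_union_le _ _) _))
  omega

end IsExpander

theorem stmt_6_general {V : Type*} [Fintype V] [DecidableEq V] (G : SimpleGraph V)
    (n : ℕ) (d : ℝ) (hG : IsExpander G n d) (U : Finset V) (d' : ℝ)
    (hU : ∀ X : Finset V, 1 ≤ X.card → X.card < mOf n d →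
      d' * X.card ≤ (((extNbhd G X) ∩ U).card : ℝ))
    (harith : d' * (mOf U.card d' : ℝ) ≤
      2 * d' * ((mOf U.card d' : ℝ) - 1) - 2 * (mOf U.card d' : ℝ)) :
    ∀ W : Finset V, U ⊆ W → ∀ X ⊆ W, 1 ≤ X.card → X.card < mOf W.card d' →
      d' * X.card ≤ (((extNbhd G X) ∩ W).card : ℝ) := by
  intro W hUW X _ hX1 hXW
  rcases le_or_gt d' 0 with hd' | hd'
  · exact (mul_nonpos_of_nonpos_of_nonneg hd' (by positivity)).trans (by positivity)
  rcases lt_or_ge X.card (mOf n d) with hsmall | hlarge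
  · exact (hU X hX1 hsmall).trans
      (by exact_mod_cast card_le_card (inter_subset_inter_left hUW))
  have hcount : (W.card : ℝ) + 1 ≤ X.card + (extNbhd G X ∩ W).card + mOf n d := by
    exact_mod_cast hG.card_lt_card_add_card_extNbhd_inter hlarge W
  have hW := two_mul_mul_mOf_sub_one_lt hd' W.card
  have hgrowth := two_mul_le_mul_sub_two_of_le hd' (Nat.cast_nonneg _) harith
    (Nat.cast_le.mpr (mOf_mono hd' (card_le_card hUW)))
  have hX : (X.card : ℝ) + 1 ≤ mOf W.card d' := by exact_mod_cast hXW
  have hnd : (mOf n d : ℝ) + 1 ≤ mOf W.card d' := by exact_mod_cast hlarge.trans_lt hXW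
  linarith [mul_le_mul_of_nonneg_left hX hd'.le]

/-- deterministic part of the Partition Lemma: if `G` is an `(n,d)`-expander,
`U ⊆ V(G)`, `d' = |U|d/(5n)`, `m(n,d') ≥ m(n,d)`, every small set expands into `U` with
factor `d'`, and the stated arithmetic condition holds, then for every `W ⊇ U` the induced
subgraph `G[W]` satisfies `|N_{G[W]}(X)| ≥ d'|X|` for all `X ⊆ W` with `1 ≤ |X| < m(|W|,d')`. -/
theorem stmt_6 {V : Type*} [Fintype V] [DecidableEq V] (G : SimpleGraph V)
    (n : ℕ) (d : ℝ) (hG : IsExpander G n d) (U : Finset V) (d' : ℝ)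
    (hd' : d' = (U.card : ℝ) * d / (5 * n))
    (hm : mOf n d ≤ mOf n d')
    (hU : ∀ X : Finset V, 1 ≤ X.card → X.card < mOf n d →
      d' * X.card ≤ (((extNbhd G X) ∩ U).card : ℝ))
    (harith : d' * (mOf U.card d' : ℝ) ≤
      2 * d' * ((mOf U.card d' : ℝ) - 1) - 2 * (mOf U.card d' : ℝ)) :
    ∀ W : Finset V, U ⊆ W → ∀ X ⊆ W, 1 ≤ X.card → X.card < mOf W.card d' →
      d' * X.card ≤ (((extNbhd G X) ∩ W).card : ℝ) :=
  stmt_6_general G n d hG U d' hU harith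
end

section
/- Let d, m, k ∈ ℕ and H a graph with n = k + 4Δm vertices, where Δ ≥ 2, m = m(n,d), and d ≥ 2Δ. If H is an (n,d)-expander, then (i) |N_H(X)| ≥ Δ|X| + 1 for all X ⊆ V(H) with 1 ≤ |X| ≤ m, and (ii) |N_H(X)| ≥ Δ|X| + k for all X ⊆ V(H) with m < |X| ≤ 2m. -/
/-! If `|X| ≥ m`, then fewer than `m` vertices lie outside `X ∪ N(X)`: otherwise `m` of them
and `m` vertices of `X` would be joined by an edge (E2), putting one of them in `N(X)`. Hence
`n < |X| + |N(X)| + m`, and with `n = k + 4Δm` this gives both bounds for `m ≤ |X| ≤ 2m`.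
For `|X| < m`, (E1) gives `|N(X)| ≥ d|X| ≥ 2Δ|X|`. -/

open Finset

namespace SimpleGraph

variable {V : Type*} [Fintype V] [DecidableEq V] (G : SimpleGraph V)

theorem mem_extNbhd {X : Finset V} {v : V} :
    v ∈ extNbhd G X ↔ v ∉ X ∧ ∃ x ∈ X, G.Adj x v := by
  simp [extNbhd]

omit [Fintype V] in
theorem exists_adj_of_eCount_pos {X Y : Finset V} (h : 0 < eCount G X Y) :
    ∃ x ∈ X, ∃ y ∈ Y, G.Adj x y := by
  obtain ⟨⟨x, y⟩, hp⟩ := Finset.card_pos.mp h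
  simp only [mem_filter, mem_product] at hp
  exact ⟨x, hp.1.1, y, hp.1.2, hp.2⟩

variable {G} {m : ℕ}

theorem card_sdiff_union_extNbhd_lt
    (hedge : ∀ X Y : Finset V, Disjoint X Y → X.card = m → Y.card = m → 0 < eCount G X Y)
    {X : Finset V} (hX : m ≤ X.card) : (univ \ (X ∪ extNbhd G X)).card < m := by
  by_contra! hS
  obtain ⟨Y, hYS, hY⟩ := exists_subset_card_eq hS
  obtain ⟨X₀, hX₀X, hX₀⟩ := exists_subset_card_eq hX
  have hdisj : Disjoint X₀ Y := Finset.disjoint_left.mpr fun a ha haY => by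
    simpa [hX₀X ha] using hYS haY
  obtain ⟨x, hx, y, hy, hxy⟩ := exists_adj_of_eCount_pos G (hedge X₀ Y hdisj hX₀ hY)
  have hyS : y ∉ X ∧ y ∉ extNbhd G X := by simpa using hYS hy
  exact hyS.2 ((mem_extNbhd G).mpr ⟨hyS.1, x, hX₀X hx, hxy⟩)

theorem card_lt_card_add_card_extNbhd_add
    (hedge : ∀ X Y : Finset V, Disjoint X Y → X.card = m → Y.card = m → 0 < eCount G X Y)
    {X : Finset V} (hX : m ≤ X.card) :
    Fintype.card V < X.card + (extNbhd G X).card + m := by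
  have hsplit := card_sdiff_add_card_eq_card (subset_univ (X ∪ extNbhd G X))
  rw [card_univ] at hsplit
  have := card_sdiff_union_extNbhd_lt hedge hX
  have := card_union_le X (extNbhd G X)
  omega

end SimpleGraph

/-- if `H` is an `(n,d)`-expander on `n = k + 4Δm` vertices with `Δ ≥ 2`,
`d ≥ 2Δ` and `m = m(n,d)`, then (i) `|N_H(X)| ≥ Δ|X| + 1` for all `X` with
`1 ≤ |X| ≤ m`, and (ii) `|N_H(X)| ≥ Δ|X| + k` for all `X` with `m < |X| ≤ 2m`. -/
theorem stmt_8 {V : Type*} [Fintype V] [DecidableEq V] (H : SimpleGraph V)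
    (d m k Δ n : ℕ) (hΔ : 2 ≤ Δ) (hd : 2 * Δ ≤ d) (hn : n = k + 4 * Δ * m)
    (hm : m = mOf n (d : ℝ)) (hH : IsExpander H n (d : ℝ)) :
    (∀ X : Finset V, 1 ≤ X.card → X.card ≤ m →
      Δ * X.card + 1 ≤ (extNbhd H X).card) ∧
    (∀ X : Finset V, m < X.card → X.card ≤ 2 * m →
      Δ * X.card + k ≤ (extNbhd H X).card) := by
  obtain ⟨hcard, hE1, hE2⟩ := hH
  rw [← hm] at hE1 hE2
  have hlarge : ∀ X : Finset V, m ≤ X.card → n < X.card + (extNbhd H X).card + m :=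
    fun X hX => hcard ▸ SimpleGraph.card_lt_card_add_card_extNbhd_add hE2 hX
  have hΔm : 2 * m ≤ Δ * m := Nat.mul_le_mul_right m hΔ
  refine ⟨fun X hX1 hXm => ?_, fun X hXm hX2m => ?_⟩
  · rcases hXm.lt_or_eq with hlt | rfl
    · have hdX : d * X.card ≤ (extNbhd H X).card := by exact_mod_cast hE1 X hX1 hlt
      have h2ΔX : 2 * Δ * X.card ≤ d * X.card := Nat.mul_le_mul_right _ hd
      nlinarith
    · have hN := hlarge X le_rfl
      nlinarith
  · have hN := hlarge X hXm.le
    have hΔX : Δ * X.card ≤ Δ * (2 * m) := Nat.mul_le_mul_left Δ hX2m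
    nlinarith
end

section
/- Let d : ℕ → ℝ⁺ with d(n) ≥ 3 for all n, and let p = p(n) = 7d(n)·log(n)/n. Then asymptotically almost surely, the random graph G(n,p) is an (n,d(n))-expander. -/
/-!
A graph on `Fin n` fails to be an `(n, d)`-expander only if either some `k`-set `X`
(`1 ≤ k < m`) has no edge to the complement of `X ∪ N` for some set `N` of size `⌈d k⌉ - 1`,
or two disjoint `m`-sets span no edge. In `G(n, p)` a fixed pair of disjoint sets `A, B` spans
no edge with probability `(1 - p)^{|A||B|} ≤ exp (-p |A| |B|)`, and there are at most
`n^{k + ⌈d k⌉}`, resp. `n^{2m}`, configurations. For `p = 7 d log n / n` the union bound gives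
`n^{-2}` for each `k` and `n^{-1}` for the pairs, so the failure probability is at most `2 / n`.
-/

open MeasureTheory Finset ENNReal

/-- The sample space of `G(n,p)`: one Bernoulli bit per potential edge. -/
abbrev EdgeSpace (n : ℕ) := {e : Sym2 (Fin n) // ¬ e.IsDiag} → Bool

/-- The product Bernoulli measure on `EdgeSpace n` with edge probability `p`
(truncated to `[0,1]`). -/
noncomputable def gnp (n : ℕ) (p : ℝ) : Measure (EdgeSpace n) :=
  Measure.pi fun _ =>
    (PMF.bernoulli (min (Real.toNNReal p) 1) (min_le_right _ _)).toMeasure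

/-- The random graph determined by an outcome `ω : EdgeSpace n`. -/
def graphOf {n : ℕ} (ω : EdgeSpace n) : SimpleGraph (Fin n) :=
  SimpleGraph.fromRel fun x y =>
    ∃ h : ¬ (s(x, y) : Sym2 (Fin n)).IsDiag, ω ⟨s(x, y), h⟩ = true

open Real

instance isProbabilityMeasure_gnp (n : ℕ) (p : ℝ) : IsProbabilityMeasure (gnp n p) := by
  unfold gnp; infer_instance

lemma gnp_forall_eq_false {n : ℕ} {p : ℝ} (hp0 : 0 ≤ p) (hp1 : p ≤ 1)
    (S : Finset {e : Sym2 (Fin n) // ¬ e.IsDiag}) :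
    gnp n p {ω | ∀ e ∈ S, ω e = false} = ENNReal.ofReal ((1 - p) ^ #S) := by
  classical
  have hS : {ω : EdgeSpace n | ∀ e ∈ S, ω e = false}
      = Set.univ.pi fun e => if e ∈ S then {false} else Set.univ := by
    ext ω
    simp only [Set.mem_ofPred_eq, Set.mem_pi, Set.mem_univ, true_imp_iff]
    refine forall_congr' fun e => ?_
    split_ifs <;> simp [*]
  have hq : min p.toNNReal 1 = p.toNNReal := min_eq_left (by simpa using hp1)
  rw [hS, gnp, Measure.pi_pi]
  simp only [apply_ite, measure_univ, Finset.prod_ite_mem, univ_inter, prod_const]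
  simp [PMF.bernoulli_apply, hq, ENNReal.ofReal_pow (sub_nonneg.2 hp1), ENNReal.ofReal_sub, hp0]
  rfl

lemma graphOf_adj {n : ℕ} (ω : EdgeSpace n) {a b : Fin n} (hab : a ≠ b) :
    (graphOf ω).Adj a b ↔ ω ⟨s(a, b), by simpa using hab⟩ = true := by
  simp only [graphOf, SimpleGraph.fromRel_adj, ne_eq, hab, not_false_eq_true, true_and,
    Sym2.eq_swap (a := b), or_self]
  exact ⟨fun ⟨_, h⟩ => h, fun h => ⟨_, h⟩⟩

def noEdges {n : ℕ} (A B : Finset (Fin n)) : Set (EdgeSpace n) :=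
  {ω | ∀ a ∈ A, ∀ b ∈ B, ¬ (graphOf ω).Adj a b}

def edgesBetween {n : ℕ} (A B : Finset (Fin n)) : Finset {e : Sym2 (Fin n) // ¬ e.IsDiag} :=
  ((A ×ˢ B).image fun q => s(q.1, q.2)).subtype _

lemma card_edgesBetween {n : ℕ} {A B : Finset (Fin n)} (hAB : Disjoint A B) :
    #(edgesBetween A B) = #A * #B := by
  have hinj : Set.InjOn (fun q : Fin n × Fin n => s(q.1, q.2)) (A ×ˢ B : Finset _) := by
    rintro ⟨a, b⟩ hab ⟨a', b'⟩ hab' h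
    simp only [coe_product, Set.mem_prod, mem_coe] at hab hab'
    rcases Sym2.eq_iff.1 h with ⟨rfl, rfl⟩ | ⟨rfl, rfl⟩
    · rfl
    · exact absurd hab'.2 (disjoint_left.1 hAB hab.1)
  rw [edgesBetween, card_subtype, filter_true_of_mem, card_image_of_injOn hinj, card_product]
  simp only [mem_image, mem_product, Prod.exists]
  rintro _ ⟨a, b, ⟨ha, hb⟩, rfl⟩
  simpa using disjoint_iff_ne.1 hAB a ha b hb

lemma noEdges_subset_forall_eq_false {n : ℕ} {A B : Finset (Fin n)} (hAB : Disjoint A B) :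
    noEdges A B ⊆ {ω | ∀ e ∈ edgesBetween A B, ω e = false} := by
  rintro ω hω ⟨e, he⟩ hmem
  simp only [edgesBetween, mem_subtype, mem_image, mem_product] at hmem
  obtain ⟨⟨a, b⟩, ⟨ha, hb⟩, rfl⟩ := hmem
  have := hω a ha b hb
  rwa [graphOf_adj ω (disjoint_iff_ne.1 hAB a ha b hb), Bool.not_eq_true] at this

lemma gnp_noEdges_le {n : ℕ} {p : ℝ} (hp0 : 0 ≤ p) (hp1 : p ≤ 1) {A B : Finset (Fin n)}
    (hAB : Disjoint A B) : gnp n p (noEdges A B) ≤ ENNReal.ofReal (exp (-(p * (#A * #B)))) :=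
  calc gnp n p (noEdges A B)
      ≤ ENNReal.ofReal ((1 - p) ^ (#A * #B)) := by
        rw [← card_edgesBetween hAB, ← gnp_forall_eq_false hp0 hp1]
        exact measure_mono (noEdges_subset_forall_eq_false hAB)
    _ ≤ ENNReal.ofReal (exp (-p) ^ (#A * #B)) := by
        gcongr
        linarith [add_one_le_exp (-p)]
    _ = ENNReal.ofReal (exp (-(p * (#A * #B)))) := by
        rw [← exp_nat_mul]; push_cast; ring_nf

lemma measure_biUnion_powersetCard_le {Ω : Type*} [MeasurableSpace Ω] (μ : Measure Ω)
    {n a b : ℕ} (hn : 0 < n) {s : Finset (Finset (Fin n) × Finset (Fin n))}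
    (hs : s ⊆ powersetCard a univ ×ˢ powersetCard b univ)
    (F : Finset (Fin n) × Finset (Fin n) → Set Ω) {c : ℝ}
    (hF : ∀ q ∈ s, μ (F q) ≤ ENNReal.ofReal (exp (-c))) :
    μ (⋃ q ∈ s, F q) ≤ ENNReal.ofReal (exp ((a + b) * Real.log n - c)) := by
  have hcard : #s ≤ n ^ (a + b) := by
    calc #s ≤ n.choose a * n.choose b := by simpa using card_le_card hs
      _ ≤ n ^ a * n ^ b := Nat.mul_le_mul (Nat.choose_le_pow n a) (Nat.choose_le_pow n b)
      _ = n ^ (a + b) := (pow_add _ _ _).symm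
  have hexp : exp ((a + b) * Real.log n - c) = (n : ℝ) ^ (a + b) * exp (-c) := by
    rw [sub_eq_add_neg, exp_add, ← Nat.cast_add, exp_nat_mul, Real.exp_log (by exact_mod_cast hn)]
  calc μ (⋃ q ∈ s, F q) ≤ ∑ q ∈ s, μ (F q) := measure_biUnion_finset_le _ _
    _ ≤ #s • ENNReal.ofReal (exp (-c)) := sum_le_card_nsmul _ _ _ hF
    _ ≤ (n ^ (a + b)) • ENNReal.ofReal (exp (-c)) := by gcongr
    _ = ENNReal.ofReal (exp ((a + b) * Real.log n - c)) := by
      rw [hexp, ENNReal.ofReal_mul (by positivity), nsmul_eq_mul]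
      norm_cast

lemma exists_card_eq_forall_not_adj {V : Type*} [Fintype V] [DecidableEq V]
    (G : SimpleGraph V) (X : Finset V) {t : ℕ} (ht : #(extNbhd G X) ≤ t)
    (htV : t ≤ Fintype.card V) : ∃ N : Finset V, #N = t ∧ ∀ a ∈ X, ∀ b ∉ X ∪ N, ¬ G.Adj a b := by
  obtain ⟨N, hsub, -, hN⟩ := exists_subsuperset_card_eq (subset_univ _) ht (by simpa using htV)
  refine ⟨N, hN, fun a ha b hb hab => ?_⟩
  rw [mem_union, not_or] at hb
  exact hb.2 (hsub (by simpa [extNbhd] using ⟨hb.1, a, ha, hab⟩))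

lemma two_mul_mul_lt_of_lt_mOf {n k : ℕ} {d : ℝ} (hd : 0 < d) (hk : k < mOf n d) :
    2 * d * k < n := by
  have := Nat.lt_ceil.1 hk
  rwa [lt_div_iff₀ (by positivity), mul_comm] at this

def expansionFailure (n : ℕ) (d : ℝ) (k : ℕ) : Set (EdgeSpace n) :=
  ⋃ q ∈ powersetCard k univ ×ˢ powersetCard (⌈d * k⌉₊ - 1) univ,
    noEdges q.1 (univ \ (q.1 ∪ q.2))

def pairFailure (n : ℕ) (d : ℝ) : Set (EdgeSpace n) :=
  ⋃ q ∈ (powersetCard (mOf n d) univ ×ˢ powersetCard (mOf n d) univ).filter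
    (fun q => Disjoint q.1 q.2), noEdges q.1 q.2

lemma compl_isExpander_subset {n : ℕ} {d : ℝ} (hd : 0 < d) :
    {ω : EdgeSpace n | IsExpander (graphOf ω) n d}ᶜ ⊆
      (⋃ k ∈ Icc 1 (mOf n d - 1), expansionFailure n d k) ∪ pairFailure n d := by
  intro ω hω
  simp only [Set.mem_compl_iff, Set.mem_ofPred_eq, IsExpander, Fintype.card_fin, true_and,
    not_and_or, not_forall, not_le, not_lt, Nat.le_zero] at hω
  rcases hω with ⟨X, hX1, hXm, hexp⟩ | ⟨X, Y, hXY, hX, hY, hcount⟩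
  · left
    have hext : #(extNbhd (graphOf ω) X) ≤ ⌈d * #X⌉₊ - 1 := by
      have := Nat.lt_ceil.2 hexp
      omega
    have htn : ⌈d * #X⌉₊ - 1 ≤ n := by
      have := Nat.ceil_le.2 (show d * #X ≤ n by
        nlinarith [two_mul_mul_lt_of_lt_mOf hd hXm, (by positivity : 0 ≤ d * #X)])
      omega
    obtain ⟨N, hN, hno⟩ := exists_card_eq_forall_not_adj _ X hext (by simpa using htn)
    simp only [Set.mem_iUnion, expansionFailure]
    exact ⟨#X, mem_Icc.2 ⟨hX1, by omega⟩, (X, N), by simp [hN],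
      fun a ha b hb => hno a ha b (mem_sdiff.1 hb).2⟩
  · right
    simp only [pairFailure, Set.mem_iUnion]
    refine ⟨(X, Y), by simp [hX, hY, hXY], fun a ha b hb hab => ?_⟩
    classical
    simp only [eCount, card_eq_zero, filter_eq_empty_iff, mem_product, and_imp, Prod.forall] at hcount
    exact hcount a b ha hb hab

lemma expansion_exponent_le {n d k t L : ℝ} (hd : 3 ≤ d) (hL : 0 ≤ L) (hn : 0 < n)
    (hk : 1 ≤ k) (hkn : 2 * d * k < n) (ht : t ≤ d * k) :
    (k + t) * L - 7 * d * L / n * (k * (n - k - t)) ≤ -(2 * L) := by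
  have hfar : n / 3 ≤ n - k - t := by nlinarith
  have hmain : 7 * d * L / n * (k * (n / 3)) ≤ 7 * d * L / n * (k * (n - k - t)) := by
    gcongr
  have hcancel : 7 * d * L / n * (k * (n / 3)) = 7 / 3 * (d * k * L) := by
    field_simp
  nlinarith [mul_nonneg (mul_nonneg (by linarith : 0 ≤ d - 3) (by linarith : 0 ≤ k)) hL,
    mul_nonneg (by linarith : 0 ≤ k - 1) hL, mul_le_mul_of_nonneg_right ht hL]

lemma pair_exponent_le {n d m L : ℝ} (hL : 0 ≤ L) (hn : 0 < n) (hm : 1 ≤ m)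
    (hnm : n ≤ 2 * d * m) : (m + m) * L - 7 * d * L / n * (m * m) ≤ -L := by
  have hpm : 7 / 2 * L ≤ 7 * d * L / n * m := by
    rw [show 7 * d * L / n * m = 7 * d * L * m / n by ring, le_div_iff₀ hn]
    nlinarith
  nlinarith [mul_le_mul_of_nonneg_right hpm (by linarith : 0 ≤ m)]

lemma gnp_expansionFailure_le {n k : ℕ} {d : ℝ} (hd : 3 ≤ d) (hn : 0 < n)
    (hp1 : 7 * d * Real.log n / n ≤ 1) (hk : 1 ≤ k) (hkm : k < mOf n d) :
    gnp n (7 * d * Real.log n / n) (expansionFailure n d k)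
      ≤ ENNReal.ofReal (exp (-(2 * Real.log n))) := by
  set t := ⌈d * k⌉₊ - 1
  have hL : 0 ≤ Real.log n := Real.log_natCast_nonneg n
  have hn' : (0 : ℝ) < n := by exact_mod_cast hn
  have hp0 : 0 ≤ 7 * d * Real.log n / n := by positivity
  have ht : (t : ℝ) ≤ d * k := by
    have : t < ⌈d * k⌉₊ := by
      have := Nat.ceil_pos.2 (by positivity : 0 < d * k)
      omega
    exact (Nat.lt_ceil.1 this).le
  have hkn := two_mul_mul_lt_of_lt_mOf (by linarith) hkm
  refine (measure_biUnion_powersetCard_le _ hn subset_rfl _ fun q hq => ?_).trans <|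
    ENNReal.ofReal_le_ofReal <| exp_le_exp.2 <|
      expansion_exponent_le hd hL hn' (by exact_mod_cast hk) hkn ht
  obtain ⟨hX, hN⟩ := mem_product.1 hq
  rw [mem_powersetCard] at hX hN
  refine (gnp_noEdges_le hp0 hp1 (disjoint_sdiff.mono_left subset_union_left)).trans ?_
  have hB : (n : ℝ) - k - t ≤ #(univ \ (q.1 ∪ q.2)) := by
    have hXN : #(q.1 ∪ q.2) ≤ k + t := by grind [card_union_le]
    rw [card_univ_sdiff, Fintype.card_fin, Nat.cast_sub (card_le_univ _ |>.trans_eq (by simp))]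
    have : (#(q.1 ∪ q.2) : ℝ) ≤ k + t := by exact_mod_cast hXN
    linarith
  gcongr
  · nlinarith
  · exact hX.2.ge

lemma gnp_pairFailure_le {n : ℕ} {d : ℝ} (hd : 0 < d) (hn : 0 < n)
    (hp1 : 7 * d * Real.log n / n ≤ 1) :
    gnp n (7 * d * Real.log n / n) (pairFailure n d) ≤ ENNReal.ofReal (exp (-Real.log n)) := by
  set m := mOf n d
  have hn' : (0 : ℝ) < n := by exact_mod_cast hn
  have hp0 : 0 ≤ 7 * d * Real.log n / n := by positivity
  have hm : 1 ≤ m := Nat.ceil_pos.2 (by positivity)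
  have hnm : (n : ℝ) ≤ 2 * d * m := (div_le_iff₀' (by positivity)).1 (Nat.le_ceil _)
  refine (measure_biUnion_powersetCard_le _ hn (filter_subset _ _) _ fun q hq => ?_).trans <|
    ENNReal.ofReal_le_ofReal <| exp_le_exp.2 <|
      pair_exponent_le (Real.log_natCast_nonneg n) hn' (by exact_mod_cast hm) hnm
  simp only [mem_filter, mem_product, mem_powersetCard] at hq
  obtain ⟨⟨⟨-, hX⟩, -, hY⟩, hXY⟩ := hq
  simpa [hX, hY] using gnp_noEdges_le hp0 hp1 hXY

lemma gnp_compl_isExpander_le {n : ℕ} {d : ℝ} (hd : 3 ≤ d) (hn : 0 < n)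
    (hp1 : 7 * d * Real.log n / n ≤ 1) :
    gnp n (7 * d * Real.log n / n) {ω | IsExpander (graphOf ω) n d}ᶜ
      ≤ 2 * ENNReal.ofReal (exp (-Real.log n)) := by
  set μ := gnp n (7 * d * Real.log n / n)
  have hn' : (0 : ℝ) < n := by exact_mod_cast hn
  have hmn : ((mOf n d - 1 : ℕ) : ℝ) ≤ n := by
    have : mOf n d ≤ n := Nat.ceil_le.2 (div_le_self hn'.le (by linarith))
    exact_mod_cast (Nat.sub_le _ _).trans this
  have hsum : ((mOf n d - 1 : ℕ) : ℝ) * exp (-(2 * Real.log n)) ≤ exp (-Real.log n) :=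
    calc ((mOf n d - 1 : ℕ) : ℝ) * exp (-(2 * Real.log n)) ≤ n * exp (-(2 * Real.log n)) := by
          gcongr
      _ = exp (-Real.log n) := by
          rw [two_mul, neg_add, exp_add, exp_neg, Real.exp_log hn']
          field_simp
  calc μ {ω | IsExpander (graphOf ω) n d}ᶜ
      ≤ μ (⋃ k ∈ Icc 1 (mOf n d - 1), expansionFailure n d k) + μ (pairFailure n d) :=
        (measure_mono (compl_isExpander_subset (by linarith))).trans (measure_union_le _ _)
    _ ≤ #(Icc 1 (mOf n d - 1)) • ENNReal.ofReal (exp (-(2 * Real.log n)))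
          + ENNReal.ofReal (exp (-Real.log n)) := by
        gcongr
        · refine (measure_biUnion_finset_le _ _).trans (sum_le_card_nsmul _ _ _ fun k hk => ?_)
          exact gnp_expansionFailure_le hd hn hp1 (mem_Icc.1 hk).1 (by grind)
        · exact gnp_pairFailure_le (by linarith) hn hp1
    _ ≤ 2 * ENNReal.ofReal (exp (-Real.log n)) := by
        rw [Nat.card_Icc, add_tsub_cancel_right, nsmul_eq_mul, ← ENNReal.ofReal_natCast,
          ← ENNReal.ofReal_mul (by positivity), two_mul (ENNReal.ofReal _)]
        exact add_le_add_left (ENNReal.ofReal_le_ofReal hsum) _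

lemma tendsto_measure_nhds_one_of_compl {ι : Type*} {l : Filter ι} {Ω : ι → Type*}
    [∀ i, MeasurableSpace (Ω i)] {μ : ∀ i, Measure (Ω i)} [∀ i, IsProbabilityMeasure (μ i)]
    {s : ∀ i, Set (Ω i)} (h : Filter.Tendsto (fun i => μ i (s i)ᶜ) l (nhds 0)) :
    Filter.Tendsto (fun i => μ i (s i)) l (nhds 1) := by
  have hlow : Filter.Tendsto (fun i => 1 - μ i (s i)ᶜ) l (nhds 1) := by
    simpa using ENNReal.Tendsto.sub tendsto_const_nhds h (Or.inl ENNReal.one_ne_top)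
  refine tendsto_of_tendsto_of_tendsto_of_le_of_le hlow tendsto_const_nhds (fun i => ?_)
    fun i => prob_le_one
  rw [tsub_le_iff_right, ← measure_univ (μ := μ i), ← Set.union_compl_self (s i)]
  exact measure_union_le _ _

/-- if `d : ℕ → ℝ` satisfies `d(n) ≥ 3` (and the edge probability
`p(n) = 7 d(n) log n / n` is eventually a probability), then `G(n, p(n))` is
asymptotically almost surely an `(n, d(n))`-expander. -/
theorem stmt_12 (d : ℕ → ℝ) (hd : ∀ n, 3 ≤ d n)
    (hp : ∀ᶠ n in Filter.atTop, 7 * d n * Real.log n / n ≤ 1) :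
    Filter.Tendsto
      (fun n => gnp n (7 * d n * Real.log n / n)
        {ω | IsExpander (graphOf ω) n (d n)})
      Filter.atTop (nhds 1) := by
  have hbound : ∀ᶠ n : ℕ in Filter.atTop, gnp n (7 * d n * Real.log n / n)
      {ω | IsExpander (graphOf ω) n (d n)}ᶜ ≤ 2 * ENNReal.ofReal (exp (-Real.log n)) := by
    filter_upwards [hp, Filter.eventually_gt_atTop 0] with n hp1 hn
    exact gnp_compl_isExpander_le (hd n) hn hp1
  have hlim : Filter.Tendsto (fun n : ℕ => 2 * ENNReal.ofReal (exp (-Real.log n)))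
      Filter.atTop (nhds 0) := by
    simpa using ENNReal.Tendsto.const_mul (ENNReal.tendsto_ofReal <|
      tendsto_exp_neg_atTop_nhds_zero.comp <|
        Real.tendsto_log_atTop.comp tendsto_natCast_atTop_atTop) (Or.inr ENNReal.ofNat_ne_top)
  exact tendsto_measure_nhds_one_of_compl <| tendsto_of_tendsto_of_tendsto_of_le_of_le'
    tendsto_const_nhds hlim (.of_forall fun _ => zero_le) hbound
end

section
/- Let C > 0, let d : ℕ → ℝ⁺ satisfy d ≥ 3, and let (G_n) be a sequence of random graph models on n vertices such that for all large n and all disjoint X, Y ⊆ V(G) with either 1 ≤ |X| < m(n,d) and |Y| = n − ⌈(d+1)|X|⌉ + 1, or |X| = |Y| = m(n,d), one has Pr[e_G(X,Y) = 0] ≤ C·n^{−6d|X||Y|/n}. Then a random graph drawn from G_n is a.a.s. an (n,d)-expander. -/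
open Finset

open MeasureTheory

instance (n : ℕ) : MeasurableSpace (SimpleGraph (Fin n)) := ⊤

/-!
A graph on `n` vertices that is not an `(n,d)`-expander contains a "test pair" `(X, Y)` of
disjoint sets with no edge between them: either `|X| = |Y| = m(n,d)` (failure of (E2)), or
`1 ≤ |X| < m(n,d)` and `|N(X)| < d|X|` (failure of (E1)), in which case any
`n + 1 - ⌈(d+1)|X|⌉` vertices outside `X ∪ N(X)` form `Y`. The sizes of a test pair are
determined by `|X| = a`, and by the union bound the failure probability is at most
`C ∑ₐ binom(n,a) binom(n,|Y|) n^{-6da|Y|/n}`. Each summand is at most `C n^{-a}` since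
`d ≥ 3`, so the total is `O(C/n)`.
-/

open Filter Topology

noncomputable def partnerCard (n : ℕ) (d : ℝ) (a : ℕ) : ℕ :=
  if a < mOf n d then n + 1 - ⌈(d + 1) * a⌉₊ else mOf n d

lemma one_le_mOf {n : ℕ} {d : ℝ} (hn : 0 < n) (hd : 0 < d) : 1 ≤ mOf n d :=
  Nat.one_le_iff_ne_zero.2 fun h => by
    rw [mOf, Nat.ceil_eq_zero] at h
    have : (0 : ℝ) < n / (2 * d) := by positivity
    linarith

lemma choose_mul_choose_mul_rpow_le {n : ℕ} (hn : 1 ≤ n) {a b : ℕ} {e s : ℝ}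
    (h : a + b + e ≤ s) : (n.choose a * n.choose b : ℝ) * (n : ℝ) ^ e ≤ (n : ℝ) ^ s := by
  have hn' : (1 : ℝ) ≤ n := by exact_mod_cast hn
  have choose_le (k : ℕ) : (n.choose k : ℝ) ≤ (n : ℝ) ^ (k : ℝ) := by
    rw [Real.rpow_natCast]
    exact_mod_cast Nat.choose_le_pow n k
  calc (n.choose a * n.choose b : ℝ) * (n : ℝ) ^ e
      ≤ (n : ℝ) ^ (a : ℝ) * (n : ℝ) ^ (b : ℝ) * (n : ℝ) ^ e := by
        gcongr <;> exact choose_le _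
    _ = (n : ℝ) ^ (a + b + e : ℝ) := by
        rw [Real.rpow_add (by positivity), Real.rpow_add (by positivity)]
    _ ≤ (n : ℝ) ^ s := Real.rpow_le_rpow_of_exponent_le hn' h

-- For `a < m(n,d)` the set `Y` misses only `⌈(d+1)a⌉ - 1` vertices, so we count it by its
-- complement, while `|Y| ≥ n/3` makes the exponent at most `-2da`.
lemma choose_mul_choose_partnerCard_mul_rpow_le_of_lt {n a : ℕ} {d : ℝ} (hd : 3 ≤ d)
    (ha : 1 ≤ a) (ham : a < mOf n d) :
    (n.choose a * n.choose (partnerCard n d a) : ℝ) *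
        (n : ℝ) ^ (-(6 * d * a * partnerCard n d a) / n) ≤ (n : ℝ) ^ (-(a : ℝ)) := by
  have han : (a : ℝ) * (2 * d) < n := (lt_div_iff₀ (by linarith)).1 (Nat.lt_ceil.1 ham)
  have ha' : (1 : ℝ) ≤ a := by exact_mod_cast ha
  have hn : (0 : ℝ) < n := by nlinarith
  have hsize : (d + 1) * a ≤ 2 * n / 3 := by nlinarith
  set c := ⌈(d + 1) * (a : ℝ)⌉₊ with hc
  have hc_lt : (c : ℝ) < (d + 1) * a + 1 := Nat.ceil_lt_add_one (by positivity)
  have hc_le : c ≤ n + 1 := by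
    have : (c : ℝ) < n + 1 + 1 := by linarith
    exact_mod_cast (Nat.lt_add_one_iff.1 (by exact_mod_cast this))
  have hb : partnerCard n d a = n + 1 - c := if_pos ham
  have hb_le : n + 1 - c ≤ n := by
    have : 1 ≤ c := Nat.one_le_iff_ne_zero.2 fun h => by
      rw [hc, Nat.ceil_eq_zero] at h; nlinarith
    omega
  have hb_cast : ((n + 1 - c : ℕ) : ℝ) = n + 1 - c := by
    rw [Nat.cast_sub hc_le]; push_cast; ring
  have hcompl : ((n - (n + 1 - c) : ℕ) : ℝ) = c - 1 := by
    rw [Nat.cast_sub hb_le, hb_cast]; ring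
  rw [hb, ← Nat.choose_symm hb_le]
  apply choose_mul_choose_mul_rpow_le (by exact_mod_cast (show (1 : ℝ) ≤ n by nlinarith))
  have hY : 2 * d * a ≤ 6 * d * a * (n + 1 - c) / n := by
    have hthird : (n : ℝ) ≤ 3 * (n + 1 - c) := by linarith
    rw [le_div_iff₀ hn]
    nlinarith [mul_le_mul_of_nonneg_left hthird (by positivity : (0 : ℝ) ≤ 2 * d * a)]
  rw [hcompl, hb_cast, neg_div]
  nlinarith

lemma choose_mul_choose_partnerCard_mul_rpow_le_of_eq {n : ℕ} {d : ℝ} (hd : 0 < d)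
    (hn : 1 ≤ n) :
    (n.choose (mOf n d) * n.choose (partnerCard n d (mOf n d)) : ℝ) *
        (n : ℝ) ^ (-(6 * d * mOf n d * partnerCard n d (mOf n d)) / n) ≤
      (n : ℝ) ^ (-(mOf n d : ℝ)) := by
  rw [partnerCard, if_neg (lt_irrefl _)]
  apply choose_mul_choose_mul_rpow_le hn
  have hn' : (0 : ℝ) < n := by exact_mod_cast hn
  have hm : (n : ℝ) ≤ 2 * d * mOf n d := by
    have := Nat.le_ceil ((n : ℝ) / (2 * d))
    rwa [div_le_iff₀ (by positivity), mul_comm] at this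
  have hexp : 3 * (mOf n d : ℝ) ≤ 6 * d * mOf n d * mOf n d / n := by
    rw [le_div_iff₀ hn']
    nlinarith [mul_le_mul_of_nonneg_left hm (by positivity : (0 : ℝ) ≤ 3 * mOf n d)]
  rw [neg_div]
  linarith

lemma choose_mul_choose_partnerCard_mul_rpow_le {n a : ℕ} {d : ℝ} (hd : 3 ≤ d) (hn : 1 ≤ n)
    (ha : a ∈ Icc 1 (mOf n d)) :
    (n.choose a * n.choose (partnerCard n d a) : ℝ) *
        (n : ℝ) ^ (-(6 * d * a * partnerCard n d a) / n) ≤ (n : ℝ) ^ (-(a : ℝ)) := by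
  obtain ⟨ha1, ham⟩ := mem_Icc.1 ha
  rcases ham.lt_or_eq with ham | rfl
  · exact choose_mul_choose_partnerCard_mul_rpow_le_of_lt hd ha1 ham
  · exact choose_mul_choose_partnerCard_mul_rpow_le_of_eq (by linarith) hn

lemma sum_Icc_rpow_neg_le {n : ℕ} (hn : 2 ≤ n) (m : ℕ) :
    ∑ a ∈ Icc 1 m, (n : ℝ) ^ (-(a : ℝ)) ≤ 2 / n := by
  have hn' : (2 : ℝ) ≤ n := by exact_mod_cast hn
  have hinv : (n : ℝ)⁻¹ < 1 := inv_lt_one_of_one_lt₀ (by linarith)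
  calc ∑ a ∈ Icc 1 m, (n : ℝ) ^ (-(a : ℝ))
        = ∑ a ∈ Ico 1 (m + 1), (n : ℝ)⁻¹ ^ a := by
        refine sum_congr (by rfl) fun a _ => ?_
        rw [Real.rpow_neg (by positivity), Real.rpow_natCast, inv_pow]
    _ ≤ (n : ℝ)⁻¹ ^ 1 / (1 - (n : ℝ)⁻¹) :=
        geom_sum_Ico_le_of_lt_one (by positivity) hinv
    _ ≤ 2 / n := by
        rw [pow_one, div_le_div_iff₀ (by linarith) (by positivity)]
        field_simp
        linarith

variable {V : Type*}

def IsTestPair (n : ℕ) (d : ℝ) (X Y : Finset V) : Prop :=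
  Disjoint X Y ∧
    ((1 ≤ X.card ∧ X.card < mOf n d ∧
        (Y.card : ℝ) = (n : ℝ) - (⌈(d + 1) * X.card⌉ : ℝ) + 1) ∨
      (X.card = mOf n d ∧ Y.card = mOf n d))

lemma IsTestPair.card_mem {n : ℕ} {d : ℝ} (hn : 0 < n) (hd : 0 < d) {X Y : Finset V}
    (h : IsTestPair n d X Y) :
    X.card ∈ Icc 1 (mOf n d) ∧ Y.card = partnerCard n d X.card := by
  rcases h.2 with ⟨hX1, hXm, hY⟩ | ⟨hX, hY⟩
  · refine ⟨mem_Icc.2 ⟨hX1, hXm.le⟩, ?_⟩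
    rw [← natCast_ceil_eq_intCast_ceil (by positivity)] at hY
    have : Y.card + ⌈(d + 1) * (X.card : ℝ)⌉₊ = n + 1 := by
      exact_mod_cast (by linarith : (Y.card : ℝ) + ⌈(d + 1) * (X.card : ℝ)⌉₊ = n + 1)
    rw [partnerCard, if_pos hXm]
    omega
  · rw [hX, hY, partnerCard, if_neg (lt_irrefl _)]
    exact ⟨mem_Icc.2 ⟨one_le_mOf hn hd, le_rfl⟩, rfl⟩

variable [Fintype V] [DecidableEq V]

lemma eCount_eq_zero_of_subset_compl {G : SimpleGraph V} {X Y : Finset V}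
    (hY : Y ⊆ (X ∪ extNbhd G X)ᶜ) : eCount G X Y = 0 := by
  simp only [eCount, card_eq_zero, filter_eq_empty_iff, mem_product]
  rintro ⟨x, y⟩ ⟨hx, hy⟩ hxy
  have hy' := hY hy
  simp only [extNbhd, mem_compl, mem_union, mem_filter, mem_univ, true_and, not_or] at hy'
  exact hy'.2 ⟨hy'.1, x, hx, hxy⟩

lemma exists_isTestPair_eCount_eq_zero_of_card_extNbhd_lt {G : SimpleGraph V} {n : ℕ} {d : ℝ}
    (hV : Fintype.card V = n) (hd : 1 ≤ d) {X : Finset V} (hX1 : 1 ≤ X.card)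
    (hXm : X.card < mOf n d) (hN : ((extNbhd G X).card : ℝ) < d * X.card) :
    ∃ Y, IsTestPair n d X Y ∧ eCount G X Y = 0 := by
  set c := ⌈(d + 1) * (X.card : ℝ)⌉₊ with hc
  have hS : (X ∪ extNbhd G X).card < c := by
    have h1 : ((X ∪ extNbhd G X).card : ℝ) ≤ X.card + (extNbhd G X).card := by
      exact_mod_cast card_union_le _ _
    have h2 : (d + 1) * (X.card : ℝ) ≤ c := Nat.le_ceil _
    exact_mod_cast (by linarith : ((X ∪ extNbhd G X).card : ℝ) < c)
  have hcn : c ≤ n := by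
    have hX : (X.card : ℝ) < n / (2 * d) := Nat.lt_ceil.1 hXm
    rw [lt_div_iff₀ (by linarith)] at hX
    exact Nat.ceil_le.2 (by nlinarith)
  have hcompl : n + 1 - c ≤ (X ∪ extNbhd G X)ᶜ.card := by
    rw [card_compl, hV]
    omega
  obtain ⟨Y, hYS, hYc⟩ := exists_subset_card_eq hcompl
  refine ⟨Y, ⟨disjoint_left.2 fun x hx hy => ?_, Or.inl ⟨hX1, hXm, ?_⟩⟩,
    eCount_eq_zero_of_subset_compl hYS⟩
  · exact mem_compl.1 (hYS hy) (mem_union_left _ hx)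
  · rw [← natCast_ceil_eq_intCast_ceil (by positivity), ← hc, hYc, Nat.cast_sub (by omega)]
    push_cast
    ring

lemma exists_isTestPair_eCount_eq_zero_of_not_isExpander {G : SimpleGraph V} {n : ℕ} {d : ℝ}
    (hV : Fintype.card V = n) (hd : 1 ≤ d) (hG : ¬ IsExpander G n d) :
    ∃ X Y, IsTestPair n d X Y ∧ eCount G X Y = 0 := by
  simp only [IsExpander, hV, true_and, not_and_or, not_forall, not_le, not_lt,
    Nat.le_zero] at hG
  rcases hG with ⟨X, hX1, hXm, hN⟩ | ⟨X, Y, hXY, hX, hY, h0⟩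
  · exact ⟨X, exists_isTestPair_eCount_eq_zero_of_card_extNbhd_lt hV hd hX1 hXm hN⟩
  · exact ⟨X, Y, ⟨hXY, Or.inr ⟨hX, hY⟩⟩, h0⟩

noncomputable def sizedPairs (n : ℕ) (d : ℝ) : Finset (Finset V × Finset V) :=
  (Icc 1 (mOf n d)).biUnion fun a =>
    powersetCard a univ ×ˢ powersetCard (partnerCard n d a) univ

lemma IsTestPair.mem_sizedPairs {n : ℕ} {d : ℝ} (hn : 0 < n) (hd : 0 < d) {X Y : Finset V}
    (h : IsTestPair n d X Y) : (X, Y) ∈ sizedPairs n d := by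
  obtain ⟨hX, hY⟩ := h.card_mem hn hd
  exact mem_biUnion.2 ⟨X.card, hX, by simp [hY]⟩

lemma sum_sizedPairs {n : ℕ} (hV : Fintype.card V = n) (d : ℝ) (f : ℕ → ℕ → ℝ) :
    ∑ p ∈ (sizedPairs n d : Finset (Finset V × Finset V)), f p.1.card p.2.card =
      ∑ a ∈ Icc 1 (mOf n d),
        (n.choose a * n.choose (partnerCard n d a) : ℝ) * f a (partnerCard n d a) := by
  rw [sizedPairs, sum_biUnion]
  · refine sum_congr rfl fun a _ => ?_
    rw [sum_congr rfl fun p hp => by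
      obtain ⟨h1, h2⟩ := mem_product.1 hp
      rw [(mem_powersetCard.1 h1).2, (mem_powersetCard.1 h2).2]]
    simp [hV]
  · intro a _ b _ hab
    refine disjoint_left.2 fun p ha hb => hab ?_
    rw [← (mem_powersetCard.1 (mem_product.1 ha).1).2,
      (mem_powersetCard.1 (mem_product.1 hb).1).2]

lemma sum_sizedPairs_rpow_le {n : ℕ} (hV : Fintype.card V = n) (hn : 2 ≤ n) {d : ℝ}
    (hd : 3 ≤ d) :
    ∑ p ∈ (sizedPairs n d : Finset (Finset V × Finset V)),
        (n : ℝ) ^ (-(6 * d * p.1.card * p.2.card) / n) ≤ 2 / n :=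
  calc _ = ∑ a ∈ Icc 1 (mOf n d), (n.choose a * n.choose (partnerCard n d a) : ℝ) *
          (n : ℝ) ^ (-(6 * d * a * partnerCard n d a) / n) :=
        sum_sizedPairs hV d fun a b => (n : ℝ) ^ (-(6 * d * a * b) / n)
    _ ≤ ∑ a ∈ Icc 1 (mOf n d), (n : ℝ) ^ (-(a : ℝ)) :=
        sum_le_sum fun a ha => choose_mul_choose_partnerCard_mul_rpow_le hd (by omega) ha
    _ ≤ 2 / n := sum_Icc_rpow_neg_le hn _

lemma measure_not_isExpander_le [MeasurableSpace (SimpleGraph V)]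
    (μ : Measure (SimpleGraph V)) {n : ℕ} (hV : Fintype.card V = n) (hn : 2 ≤ n) {d : ℝ}
    (hd : 3 ≤ d) {C : ℝ} (hC : 0 ≤ C)
    (h : ∀ X Y : Finset V, IsTestPair n d X Y → μ {G | eCount G X Y = 0} ≤
      ENNReal.ofReal (C * (n : ℝ) ^ (-(6 * d * X.card * Y.card) / n))) :
    μ {G | ¬ IsExpander G n d} ≤ ENNReal.ofReal (2 * C / n) := by
  classical
  set w : Finset V × Finset V → ℝ := fun p =>
    C * (n : ℝ) ^ (-(6 * d * p.1.card * p.2.card) / n)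
  set T := (sizedPairs n d).filter fun p : Finset V × Finset V => IsTestPair n d p.1 p.2
  have hcover : {G | ¬ IsExpander G n d} ⊆ ⋃ p ∈ T, {G | eCount G p.1 p.2 = 0} := by
    intro G hG
    obtain ⟨X, Y, hXY, h0⟩ :=
      exists_isTestPair_eCount_eq_zero_of_not_isExpander hV (by linarith) hG
    exact Set.mem_biUnion (mem_filter.2 ⟨hXY.mem_sizedPairs (by omega) (by linarith), hXY⟩) h0
  calc μ {G | ¬ IsExpander G n d} ≤ ∑ p ∈ T, μ {G | eCount G p.1 p.2 = 0} :=
        (measure_mono hcover).trans (measure_biUnion_finset_le _ _)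
    _ ≤ ∑ p ∈ T, ENNReal.ofReal (w p) := sum_le_sum fun p hp => h _ _ (mem_filter.1 hp).2
    _ ≤ ∑ p ∈ sizedPairs n d, ENNReal.ofReal (w p) := sum_le_sum_of_subset (filter_subset _ _)
    _ = ENNReal.ofReal
          (C * ∑ p ∈ sizedPairs n d, (n : ℝ) ^ (-(6 * d * p.1.card * p.2.card) / n)) := by
        rw [mul_sum, ENNReal.ofReal_sum_of_nonneg fun p _ => by positivity]
    _ ≤ ENNReal.ofReal (2 * C / n) := by
        gcongr
        rw [mul_comm 2 C, mul_div_assoc]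
        exact mul_le_mul_of_nonneg_left (sum_sizedPairs_rpow_le hV hn hd) hC

lemma tendsto_measure_nhds_one_of_compl_le_div {Ω : ℕ → Type*} [∀ n, MeasurableSpace (Ω n)]
    {μ : ∀ n, Measure (Ω n)} (hμ : ∀ n, IsProbabilityMeasure (μ n)) {s : ∀ n, Set (Ω n)}
    (K : ℝ)
    (h : ∀ᶠ n in atTop, μ n (s n)ᶜ ≤ ENNReal.ofReal (K / n)) :
    Tendsto (fun n => μ n (s n)) atTop (𝓝 1) := by
  have hK : Tendsto (fun n : ℕ => ENNReal.ofReal (K / n)) atTop (𝓝 0) := by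
    simpa using ENNReal.tendsto_ofReal (tendsto_const_div_atTop_nhds_zero_nat K)
  have hcompl : Tendsto (fun n => μ n (s n)ᶜ) atTop (𝓝 0) :=
    tendsto_of_tendsto_of_tendsto_of_le_of_le' tendsto_const_nhds hK
      (Eventually.of_forall fun _ => zero_le) h
  have hlower : Tendsto (fun n => 1 - μ n (s n)ᶜ) atTop (𝓝 1) := by
    simpa using ENNReal.Tendsto.sub tendsto_const_nhds hcompl (Or.inl ENNReal.one_ne_top)
  refine tendsto_of_tendsto_of_tendsto_of_le_of_le hlower tendsto_const_nhds (fun n => ?_)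
    fun n => prob_le_one
  rw [tsub_le_iff_right, ← measure_univ (μ := μ n)]
  exact measure_univ_le_add_compl _

/-- if a sequence of random graph models satisfies, for all large `n` and
all relevant pairs of disjoint sets `X, Y`, the bound
`Pr[e_G(X,Y) = 0] ≤ C·n^{-6d|X||Y|/n}`, then a random graph drawn from the `n`-th model
is a.a.s. an `(n,d)`-expander. -/
theorem stmt_13 (C : ℝ) (hC : 0 < C) (d : ℕ → ℝ) (hd : ∀ n, 3 ≤ d n)
    (μ : (n : ℕ) → Measure (SimpleGraph (Fin n)))
    (hμ : ∀ n, IsProbabilityMeasure (μ n))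
    (h : ∃ N : ℕ, ∀ n, N ≤ n → ∀ X Y : Finset (Fin n), Disjoint X Y →
      ((1 ≤ X.card ∧ X.card < mOf n (d n) ∧
          (Y.card : ℝ) = (n : ℝ) - (⌈(d n + 1) * X.card⌉ : ℝ) + 1) ∨
        (X.card = mOf n (d n) ∧ Y.card = mOf n (d n))) →
      μ n {G | eCount G X Y = 0} ≤
        ENNReal.ofReal (C * (n : ℝ) ^ (-(6 * d n * X.card * Y.card) / n))) :
    Filter.Tendsto (fun n => μ n {G | IsExpander G n (d n)})
      Filter.atTop (nhds 1) := by
  obtain ⟨N, hN⟩ := h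
  refine tendsto_measure_nhds_one_of_compl_le_div hμ (2 * C) ?_
  filter_upwards [eventually_ge_atTop (max N 2)] with n hn
  exact measure_not_isExpander_le (μ n) (Fintype.card_fin n) (le_of_max_le_right hn) (hd n)
    hC.le fun X Y hXY => hN n (le_of_max_le_left hn) X Y hXY.1 hXY.2
end

section
/- Let G be a graph obtained from a graph H by replacing each vertex v of H with two vertices u_v, u'_v and each edge {v,w} of H by either the pair of edges {u_v,u_w}, {u'_v,u'_w} or the pair {u_v,u'_w}, {u'_v,u_w}. Then every path in G from u_v to u'_v projects to a closed walk of positive length in H; consequently, if H has girth g, then the radius of G is at least g. -/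
/-!
A `G`-walk from `(v, b)` to `(v, !b)` may be shortened to a path. If that path meets both
vertices of some fibre other than the one over `v`, the segment between them is a strictly
shorter walk of the same kind, and we recurse. Otherwise two distinct edges of the path can
only lie over the same edge `{a, c}` of `H` if both fibres over `a` and `c` are met twice,
which would force `a = c = v`; so the path projects to a closed trail of `H` of positive
length, and this contains a cycle.
-/

open SimpleGraph

namespace SimpleGraph

variable {α : Type*} {G : SimpleGraph α}

theorem Walk.exists_walk_length_lt_of_mem_support [DecidableEq α] {u w x y : α}
    (p : G.Walk u w) (hx : x ∈ p.support) (hy : y ∈ p.support) (hxu : x ≠ u) (hyu : y ≠ u) :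
    ∃ q : G.Walk x y, q.length < p.length := by
  have hdrop : (p.dropUntil x hx).length < p.length := p.length_dropUntil_lt_length hx hxu
  by_cases hyd : y ∈ (p.dropUntil x hx).support
  · exact ⟨_, ((p.dropUntil x hx).length_takeUntil_le_length hyd).trans_lt hdrop⟩
  · have hyt : y ∈ (p.takeUntil x hx).support := by
      rw [← p.take_spec hx, Walk.mem_support_append_iff] at hy
      exact hy.resolve_right hyd
    refine ⟨((p.takeUntil x hx).dropUntil y hyt).reverse, ?_⟩
    rw [Walk.length_reverse]
    exact ((p.takeUntil x hx).length_dropUntil_lt_length hyt hyu).trans_le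
      (p.length_takeUntil_le_length hx)

theorem le_edist_iff {n : ℕ∞} {u v : α} : n ≤ G.edist u v ↔ ∀ p : G.Walk u v, n ≤ p.length := by
  rw [edist_eq_sInf, le_sInf_iff, Set.forall_mem_range]

end SimpleGraph

/-- `(v, false)` and `(v, true)` are `u_v` and `u'_v`; `σ v w = true` means that `{v, w}` is
replaced by the crossed pair `{u_v, u'_w}, {u'_v, u_w}`. -/
def IsSignedDoubleCover {V : Type*} (H : SimpleGraph V) (G : SimpleGraph (V × Bool))
    (σ : V → V → Bool) : Prop :=
  ∀ v w b c, G.Adj (v, b) (w, c) ↔ H.Adj v w ∧ c = xor (σ v w) b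

namespace IsSignedDoubleCover

variable {V : Type*} {H : SimpleGraph V} {G : SimpleGraph (V × Bool)} {σ : V → V → Bool}

theorem adj_fst (hG : IsSignedDoubleCover H G σ) {x y : V × Bool} (h : G.Adj x y) :
    H.Adj x.1 y.1 :=
  ((hG x.1 y.1 x.2 y.2).1 h).1

theorem snd_eq_of_adj (hG : IsSignedDoubleCover H G σ) {a c : V} {b d₁ d₂ : Bool}
    (h₁ : G.Adj (a, b) (c, d₁)) (h₂ : G.Adj (a, b) (c, d₂)) : d₁ = d₂ :=
  ((hG a c b d₁).1 h₁).2.trans ((hG a c b d₂).1 h₂).2.symm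

@[simps]
def proj (hG : IsSignedDoubleCover H G σ) : G →g H :=
  ⟨Prod.fst, hG.adj_fst⟩

theorem isTrail_map_proj (hG : IsSignedDoubleCover H G σ) {x y : V × Bool} {p : G.Walk x y}
    (hp : p.IsTrail) {v : V} (hfib : ∀ a b, (a, b) ∈ p.support → (a, !b) ∈ p.support → a = v) :
    (p.map hG.proj).IsTrail := by
  have edge_eq : ∀ x₁ y₁ x₂ y₂ : V × Bool, s(x₁, y₁) ∈ p.edges → s(x₂, y₂) ∈ p.edges →
      x₁.1 = x₂.1 → y₁.1 = y₂.1 → s(x₁, y₁) = s(x₂, y₂) := by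
    rintro ⟨a, b₁⟩ ⟨c, d₁⟩ ⟨a', b₂⟩ ⟨c', d₂⟩ he₁ he₂ (rfl : a = a') (rfl : c = c')
    have hadj₁ := p.adj_of_mem_edges he₁
    have hadj₂ := p.adj_of_mem_edges he₂
    by_cases hb : b₁ = b₂
    · subst hb
      rw [hG.snd_eq_of_adj hadj₁ hadj₂]
    · have hd : d₁ ≠ d₂ := fun hd => hb (hG.snd_eq_of_adj hadj₁.symm (hd ▸ hadj₂.symm))
      have ha : a = v := hfib a b₁ (p.fst_mem_support_of_mem_edges he₁)
        (Bool.eq_not_of_ne (Ne.symm hb) ▸ p.fst_mem_support_of_mem_edges he₂)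
      have hc : c = v := hfib c d₁ (p.snd_mem_support_of_mem_edges he₁)
        (Bool.eq_not_of_ne (Ne.symm hd) ▸ p.snd_mem_support_of_mem_edges he₂)
      exact absurd (hG.adj_fst hadj₁) (by simp [ha, hc])
  rw [Walk.isTrail_def, Walk.edges_map]
  refine hp.edges_nodup.map_on ?_
  intro e₁ he₁ e₂ he₂ h
  induction e₁ using Sym2.ind with | _ x₁ y₁ => ?_
  induction e₂ using Sym2.ind with | _ x₂ y₂ => ?_
  simp only [Sym2.map_mk, proj_apply, Sym2.eq_iff] at h
  rcases h with ⟨h₁, h₂⟩ | ⟨h₁, h₂⟩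
  · exact edge_eq x₁ y₁ x₂ y₂ he₁ he₂ h₁ h₂
  · rw [Sym2.eq_swap (a := x₂)]
    exact edge_eq x₁ y₁ y₂ x₂ he₁ (Sym2.eq_swap ▸ he₂) h₁ h₂

theorem egirth_le_length_of_isTrail (hG : IsSignedDoubleCover H G σ) {v : V} {b : Bool}
    {p : G.Walk (v, b) (v, !b)} (hp : p.IsTrail)
    (hfib : ∀ a c, (a, c) ∈ p.support → (a, !c) ∈ p.support → a = v) :
    H.egirth ≤ p.length := by
  have hne : ¬(p.map hG.proj).Nil := by
    rw [Walk.not_nil_iff_lt_length, Walk.length_map, ← Walk.not_nil_iff_lt_length]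
    exact Walk.not_nil_of_ne (by simp)
  have hcirc : (p.map hG.proj).IsCircuit :=
    ⟨hG.isTrail_map_proj hp hfib, mt Walk.eq_nil_iff_nil.mp hne⟩
  exact Walk.length_map hG.proj p ▸ hcirc.egirth_le_length

theorem egirth_le_length (hG : IsSignedDoubleCover H G σ) {v : V} {b : Bool}
    (p : G.Walk (v, b) (v, !b)) : H.egirth ≤ p.length := by
  classical
  induction hn : p.length using Nat.strong_induction_on generalizing v b p with
  | _ n ih =>
    subst hn
    grw [← p.length_bypass_le_length]
    by_cases hfib : ∀ a c, (a, c) ∈ p.bypass.support → (a, !c) ∈ p.bypass.support → a = v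
    · exact hG.egirth_le_length_of_isTrail p.bypass_isPath.isTrail hfib
    · push Not at hfib
      obtain ⟨a, c, hac, hanc, hav⟩ := hfib
      obtain ⟨q, hq⟩ := p.bypass.exists_walk_length_lt_of_mem_support hac hanc
        (by simp [hav]) (by simp [hav])
      grw [← hq]
      exact ih _ (hq.trans_le p.length_bypass_le_length) q rfl

end IsSignedDoubleCover

theorem stmt_14_general {V : Type*} (H : SimpleGraph V) (G : SimpleGraph (V × Bool))
    (σ : V → V → Bool)
    (hG : ∀ v w b c, G.Adj (v, b) (w, c) ↔ H.Adj v w ∧ c = xor (σ v w) b) :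
    (∀ (v : V) (p : G.Walk (v, false) (v, true)), p.IsPath →
      0 < p.length ∧ H.egirth ≤ (p.length : ℕ∞)) ∧
    H.egirth ≤ ⨅ u, ⨆ w, G.edist u w := by
  have hcover : IsSignedDoubleCover H G σ := hG
  refine ⟨fun v p _ => ⟨?_, hcover.egirth_le_length (b := false) p⟩, ?_⟩
  · exact Walk.not_nil_iff_lt_length.mp (Walk.not_nil_of_ne (by simp))
  · refine le_iInf fun ⟨v, b⟩ => le_iSup_of_le (v, !b) ?_
    exact le_edist_iff.mpr hcover.egirth_le_length

/-- Let `G` be a double cover of `H`: each vertex `v` of `H` is replaced by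
`(v, false)` and `(v, true)`, and each edge `{v,w}` of `H` by a perfect matching between
the fibers, encoded by a symmetric signing `σ`. Then every path in `G` from `(v, false)`
to `(v, true)` projects to a closed walk of positive length in `H` (so its length is at
least the girth of `H`); consequently, the radius of `G` is at least the girth of `H`. -/
theorem stmt_14 {V : Type*} (H : SimpleGraph V) (G : SimpleGraph (V × Bool))
    (σ : V → V → Bool) (hσ : ∀ v w, σ v w = σ w v)
    (hG : ∀ v w b c, G.Adj (v, b) (w, c) ↔ H.Adj v w ∧ c = xor (σ v w) b) :
    (∀ (v : V) (p : G.Walk (v, false) (v, true)), p.IsPath →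
      0 < p.length ∧ H.egirth ≤ (p.length : ℕ∞)) ∧
    H.egirth ≤ ⨅ u, ⨆ w, G.edist u w :=
  stmt_14_general H G σ hG
end

section
/- Let a, b ∈ ℕ and let (X, ℱ) be a finite hypergraph. If ∑_{F∈ℱ} (1+b)^{−|F|/a} < 1/(1+b), then the (a:b) Maker-Breaker game on (X,ℱ) is Breaker's win. -/
open Finset

/-- `BreakerWinsFrom a b Fam fuel M free` : with Maker to move, Maker having already
claimed `M` and the elements of `free` unclaimed, Breaker can ensure (within `fuel`
further rounds, enough when `fuel ≥ |free|` and `a ≥ 1`) that at the end of the game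
Maker has not claimed all elements of any `F ∈ Fam`. In each round Maker first claims
`min a |free|` free elements, then Breaker claims `min b` of the remaining free elements. -/
def BreakerWinsFrom {α : Type*} [DecidableEq α] (a b : ℕ) (Fam : Finset (Finset α)) :
    ℕ → Finset α → Finset α → Prop
  | 0, M, _ => ∀ F ∈ Fam, ¬ F ⊆ M
  | fuel + 1, M, free =>
    if free = ∅ then ∀ F ∈ Fam, ¬ F ⊆ M
    else ∀ A ⊆ free, A.card = min a free.card →
      ∃ C ⊆ free \ A, C.card = min b (free \ A).card ∧
        BreakerWinsFrom a b Fam fuel (M ∪ A) ((free \ A) \ C)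

/-- The `(a : b)` Maker-Breaker game on the hypergraph `(α, Fam)` is Breaker's win. -/
def BreakerWins {α : Type*} [Fintype α] [DecidableEq α] (a b : ℕ)
    (Fam : Finset (Finset α)) : Prop :=
  BreakerWinsFrom a b Fam (Fintype.card α) ∅ univ

/-!
Beck's potential method. Once Maker owns `M`, every set `F` not yet touched by Breaker gets
weight `(1 + b) ^ (-|F \ M| / a)`; the potential is the total weight and the danger of `x` the
weight of the sets through `x`. Breaker keeps `potential + b * danger x < 1` for every free `x`
before each Maker move. Maker's at most `a` new elements multiply the weight of `F` by
`(1 + b) ^ (k / a)` with `k = |F ∩ A| ≤ a`, which by Bernoulli is at most `1 + k b / a`; so the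
potential grows by at most `(b / a) ∑_{y ∈ A} danger y < 1 - potential` and stays below `1`.
Breaker then greedily claims the `b` most dangerous elements, each lowering the potential by at
least the danger of any element still free, which restores the invariant. A set fully claimed by
Maker would have weight `1`.
-/
namespace MakerBreaker

variable {α : Type*} [DecidableEq α]

section Definitions

variable (a b : ℕ) (Fam : Finset (Finset α))

noncomputable def weight (M F : Finset α) : ℝ :=
  ((1 : ℝ) + b) ^ (-(#(F \ M) : ℝ) / a)

-- The sets not contained in `M ∪ free` contain an element of Breaker and drop out.
noncomputable def potential (M free : Finset α) : ℝ :=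
  ∑ F ∈ Fam with F ⊆ M ∪ free, weight a b M F

noncomputable def danger (M free : Finset α) (x : α) : ℝ :=
  ∑ F ∈ Fam with F ⊆ M ∪ free ∧ x ∈ F, weight a b M F

def IsSafe (M free : Finset α) : Prop :=
  potential a b Fam M free < 1 ∧
    ∀ x ∈ free, potential a b Fam M free + b * danger a b Fam M free x < 1

end Definitions

variable {a b : ℕ} {Fam : Finset (Finset α)} {M free A g : Finset α}

lemma weight_pos (M F : Finset α) : 0 < weight a b M F := by
  unfold weight; positivity

lemma weight_eq_one_of_subset {F : Finset α} (h : F ⊆ M) : weight a b M F = 1 := by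
  simp [weight, sdiff_eq_empty_iff_subset.2 h]

lemma weight_union (hMA : Disjoint M A) (F : Finset α) :
    weight a b (M ∪ A) F = weight a b M F * ((1 : ℝ) + b) ^ ((#(F ∩ A) : ℝ) / a) := by
  have hcard : #(F \ (M ∪ A)) + #(F ∩ A) = #(F \ M) := by
    have hinter : F \ M ∩ A = F ∩ A := by
      ext y; simp only [mem_inter, mem_sdiff]
      exact ⟨fun h => ⟨h.1.1, h.2⟩, fun h => ⟨⟨h.1, disjoint_right.1 hMA h.2⟩, h.2⟩⟩
    have hdiff : F \ (M ∪ A) = (F \ M) \ A := by ext; simp [and_assoc]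
    rw [hdiff, ← hinter, card_sdiff_add_card_inter]
  unfold weight
  rw [← Real.rpow_add (by positivity), ← hcard]
  congr 1
  push_cast
  ring

lemma weight_union_le (hMA : Disjoint M A) (hA : #A ≤ a) (F : Finset α) :
    weight a b (M ∪ A) F ≤ weight a b M F * (1 + #(F ∩ A) * b / a) := by
  rw [weight_union hMA]
  gcongr
  · exact (weight_pos M F).le
  · have hle : (#(F ∩ A) : ℝ) ≤ a := by
      exact_mod_cast (card_le_card inter_subset_right).trans hA
    calc ((1 : ℝ) + b) ^ ((#(F ∩ A) : ℝ) / a) ≤ 1 + (#(F ∩ A) : ℝ) / a * b :=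
          rpow_one_add_le_one_add_mul_self (by linarith [b.cast_nonneg (α := ℝ)])
            (by positivity) (div_le_one_of_le₀ hle a.cast_nonneg)
      _ = 1 + #(F ∩ A) * b / a := by ring

lemma potential_nonneg : 0 ≤ potential a b Fam M free :=
  sum_nonneg fun F _ => (weight_pos M F).le

lemma potential_mono {s t : Finset α} (hst : s ⊆ t) :
    potential a b Fam M s ≤ potential a b Fam M t :=
  sum_le_sum_of_subset_of_nonneg
    (monotone_filter_right _ fun _ _ hF => hF.trans (union_subset_union_right hst))
    fun F _ _ => (weight_pos M F).le

lemma danger_mono {s t : Finset α} (hst : s ⊆ t) (x : α) :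
    danger a b Fam M s x ≤ danger a b Fam M t x :=
  sum_le_sum_of_subset_of_nonneg
    (monotone_filter_right _ fun _ _ hF => ⟨hF.1.trans (union_subset_union_right hst), hF.2⟩)
    fun F _ _ => (weight_pos M F).le

lemma danger_le_potential (x : α) : danger a b Fam M free x ≤ potential a b Fam M free :=
  sum_le_sum_of_subset_of_nonneg (monotone_filter_right _ fun _ _ hF => hF.1)
    fun F _ _ => (weight_pos M F).le

lemma not_subset_of_potential_lt_one (h : potential a b Fam M free < 1) :
    ∀ F ∈ Fam, ¬ F ⊆ M := by
  intro F hF hFM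
  have : weight a b M F ≤ potential a b Fam M free :=
    single_le_sum (fun F _ => (weight_pos M F).le)
      (mem_filter.2 ⟨hF, hFM.trans subset_union_left⟩)
  rw [weight_eq_one_of_subset hFM] at this
  linarith

lemma potential_erase {x : α} (hxg : x ∈ g) (hxM : x ∉ M) :
    potential a b Fam M (g.erase x) = potential a b Fam M g - danger a b Fam M g x := by
  have hfilter :
      {F ∈ Fam | F ⊆ M ∪ g.erase x} = {F ∈ {F ∈ Fam | F ⊆ M ∪ g} | x ∉ F} := by
    rw [filter_filter]
    refine filter_congr fun F _ => ⟨fun h => ⟨h.trans ?_, fun hxF => ?_⟩, fun h y hy => ?_⟩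
    · exact union_subset_union_right (erase_subset x g)
    · rcases mem_union.1 (h hxF) with h' | h'
      exacts [hxM h', notMem_erase x g h']
    · rcases mem_union.1 (h.1 hy) with h' | h'
      exacts [mem_union_left _ h',
        mem_union_right _ (mem_erase.2 ⟨by rintro rfl; exact h.2 hy, h'⟩)]
  rw [eq_sub_iff_add_eq, potential, potential, danger, hfilter, ← filter_filter, add_comm]
  exact sum_filter_add_sum_filter_not _ _ _

lemma sum_mul_card_inter (S : Finset (Finset α)) (w : Finset α → ℝ) (A : Finset α) :
    ∑ F ∈ S, w F * #(F ∩ A) = ∑ y ∈ A, ∑ F ∈ S with y ∈ F, w F := by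
  simp_rw [sum_filter]
  rw [sum_comm]
  refine sum_congr rfl fun F _ => ?_
  rw [sum_ite_mem, inter_comm, sum_const, nsmul_eq_mul, mul_comm]

lemma potential_union_le (hMf : Disjoint M free) (hA : A ⊆ free) (hAa : #A ≤ a) :
    potential a b Fam (M ∪ A) (free \ A)
      ≤ potential a b Fam M free + (∑ y ∈ A, b * danger a b Fam M free y) / a := by
  set S := {F ∈ Fam | F ⊆ M ∪ free}
  have hS : {F ∈ Fam | F ⊆ M ∪ A ∪ free \ A} = S := by
    rw [union_assoc, union_sdiff_of_subset hA]
  calc potential a b Fam (M ∪ A) (free \ A)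
      ≤ ∑ F ∈ S, weight a b M F * (1 + #(F ∩ A) * b / a) := by
        rw [potential, hS]
        exact sum_le_sum fun F _ => weight_union_le (hMf.mono_right hA) hAa F
    _ = ∑ F ∈ S, weight a b M F + (∑ F ∈ S, weight a b M F * #(F ∩ A)) * b / a := by
        rw [sum_mul, sum_div, ← sum_add_distrib]
        exact sum_congr rfl fun F _ => by ring
    _ = potential a b Fam M free + (∑ y ∈ A, b * danger a b Fam M free y) / a := by
        simp only [sum_mul_card_inter, S, filter_filter, potential, danger, mul_sum,
          mul_comm]

lemma potential_union_lt_one (hMf : Disjoint M free) (hA : A ⊆ free) (hAa : #A ≤ a)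
    (hsafe : IsSafe a b Fam M free) : potential a b Fam (M ∪ A) (free \ A) < 1 := by
  obtain ⟨hP, hdanger⟩ := hsafe
  refine (potential_union_le hMf hA hAa).trans_lt ?_
  rcases A.eq_empty_or_nonempty with rfl | hAne
  · simpa using hP
  have ha : (0 : ℝ) < a := by exact_mod_cast (card_pos.2 hAne).trans_le hAa
  have hsum : ∑ y ∈ A, b * danger a b Fam M free y < a * (1 - potential a b Fam M free) :=
    calc ∑ y ∈ A, b * danger a b Fam M free y
        < ∑ _y ∈ A, (1 - potential a b Fam M free) :=
          sum_lt_sum_of_nonempty hAne fun y hy => by linarith [hdanger y (hA hy)]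
      _ = #A * (1 - potential a b Fam M free) := by rw [sum_const, nsmul_eq_mul]
      _ ≤ a * (1 - potential a b Fam M free) := by gcongr
  rw [← lt_sub_iff_add_lt', div_lt_iff₀' ha]
  exact hsum

lemma exists_greedy_choice (m : ℕ) (hMg : Disjoint M g) :
    ∃ C ⊆ g, #C = min m #g ∧ ∀ x ∈ g \ C,
      potential a b Fam M (g \ C) + m * danger a b Fam M (g \ C) x ≤ potential a b Fam M g := by
  induction m generalizing g with
  | zero => exact ⟨∅, empty_subset g, by simp, fun x _ => by simp⟩
  | succ m ih =>
    rcases g.eq_empty_or_nonempty with rfl | hg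
    · exact ⟨∅, empty_subset _, by simp, by simp⟩
    obtain ⟨x₀, hx₀g, hx₀max⟩ := exists_max_image g (danger a b Fam M g) hg
    obtain ⟨C, hCg, hCcard, hC⟩ := ih (g := g.erase x₀) (hMg.mono_right (erase_subset x₀ g))
    have hx₀C : x₀ ∉ C := fun h => notMem_erase x₀ g (hCg h)
    have hrest : g \ insert x₀ C = g.erase x₀ \ C := by
      ext y; simp only [mem_sdiff, mem_erase, mem_insert]; tauto
    refine ⟨insert x₀ C, insert_subset hx₀g (hCg.trans (erase_subset x₀ g)), ?_, ?_⟩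
    · rw [card_insert_of_notMem hx₀C, hCcard, card_erase_of_mem hx₀g]
      have := card_pos.2 hg
      omega
    intro x hx
    rw [hrest] at hx ⊢
    have hdrop :
        potential a b Fam M (g.erase x₀) = potential a b Fam M g - danger a b Fam M g x₀ :=
      potential_erase hx₀g (disjoint_right.1 hMg hx₀g)
    have hmono : danger a b Fam M (g.erase x₀ \ C) x ≤ danger a b Fam M g x :=
      danger_mono (sdiff_subset.trans (erase_subset x₀ g)) x
    have hmax := hx₀max x (erase_subset x₀ g (mem_sdiff.1 hx).1)
    push_cast
    linarith [hC x hx]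

lemma exists_isSafe_breaker_choice (hMg : Disjoint M g) (hP : potential a b Fam M g < 1) :
    ∃ C ⊆ g, #C = min b #g ∧ IsSafe a b Fam M (g \ C) := by
  obtain ⟨C, hCg, hCcard, hC⟩ := exists_greedy_choice (a := a) (Fam := Fam) b hMg
  exact ⟨C, hCg, hCcard, (potential_mono sdiff_subset).trans_lt hP,
    fun x hx => (hC x hx).trans_lt hP⟩

lemma potential_empty_univ [Fintype α] :
    potential a b Fam ∅ univ = ∑ F ∈ Fam, ((1 : ℝ) + b) ^ (-(#F : ℝ) / a) := by
  simp [potential, weight]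

lemma isSafe_of_one_add_mul_potential_lt_one (h : (1 + b) * potential a b Fam M free < 1) :
    IsSafe a b Fam M free := by
  have hP : 0 ≤ potential a b Fam M free := potential_nonneg
  have hb : (0 : ℝ) ≤ b := b.cast_nonneg
  refine ⟨by nlinarith, fun x _ => ?_⟩
  have hx : danger a b Fam M free x ≤ potential a b Fam M free := danger_le_potential x
  nlinarith

lemma breakerWinsFrom_of_isSafe (fuel : ℕ) (hMf : Disjoint M free)
    (hsafe : IsSafe a b Fam M free) : BreakerWinsFrom a b Fam fuel M free := by
  induction fuel generalizing M free with
  | zero => exact not_subset_of_potential_lt_one hsafe.1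
  | succ fuel ih =>
    rw [BreakerWinsFrom]
    split_ifs
    · exact not_subset_of_potential_lt_one hsafe.1
    intro A hA hAcard
    have hAa : #A ≤ a := hAcard ▸ min_le_left _ _
    have hdisj : Disjoint (M ∪ A) (free \ A) :=
      disjoint_union_left.2 ⟨hMf.mono_right sdiff_subset, disjoint_sdiff⟩
    obtain ⟨C, hC, hCcard, hCsafe⟩ :=
      exists_isSafe_breaker_choice hdisj (potential_union_lt_one hMf hA hAa hsafe)
    exact ⟨C, hC, hCcard, ih (hdisj.mono_right sdiff_subset) hCsafe⟩

end MakerBreaker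

theorem stmt_17_general {α : Type*} [Fintype α] [DecidableEq α] (a b : ℕ)
    (Fam : Finset (Finset α))
    (h : ∑ F ∈ Fam, ((1 : ℝ) + b) ^ (-(F.card : ℝ) / a) < 1 / (1 + b)) :
    BreakerWins a b Fam := by
  have hsafe : MakerBreaker.IsSafe a b Fam ∅ univ := by
    refine MakerBreaker.isSafe_of_one_add_mul_potential_lt_one ?_
    rw [MakerBreaker.potential_empty_univ, ← lt_div_iff₀' (by positivity)]
    simpa using h
  exact MakerBreaker.breakerWinsFrom_of_isSafe _ (disjoint_empty_left _) hsafe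

/-- Beck's generalization of the Erdős–Selfridge criterion: if
`∑_{F ∈ ℱ} (1+b)^{-|F|/a} < 1/(1+b)`, then the `(a : b)` Maker-Breaker game on
`(X, ℱ)` is Breaker's win. -/
theorem stmt_17 {α : Type*} [Fintype α] [DecidableEq α] (a b : ℕ)
    (ha : 1 ≤ a) (hb : 1 ≤ b) (Fam : Finset (Finset α))
    (h : ∑ F ∈ Fam, ((1 : ℝ) + b) ^ (-(F.card : ℝ) / a) < 1 / (1 + b)) :
    BreakerWins a b Fam :=
  stmt_17_general a b Fam h
end
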